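/- Assume the F-expectation satisfies (H0)–(H7) and let {X(τ):τ∈S_0} be a CE admissible family with sup_{τ∈S_0} E[X(τ)] < ∞, with value function v. Then for every S∈S_0 and every λ∈(0,1), the stopping time τ^λ(S)=essinf{τ∈S_S: λ v(τ) ≤ X(τ) a.s.} satisfies λ E[v(S)] ≤ E[X(τ^λ(S))]. -/

import Mathlib

open MeasureTheory Filter Set

noncomputable section

namespace OptMultStop

variable {Ω : Type*}

/-- A real function is right-continuous with left limits (RCLL) on `[0, T]`. -/
def RCLLOn (f : ℝ → ℝ) (T : ℝ) : Prop :=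
  (∀ t ∈ Set.Ico (0 : ℝ) T, ContinuousWithinAt f (Set.Ici t) t) ∧
    ∀ t ∈ Set.Ioc (0 : ℝ) T, ∃ l : ℝ, Filter.Tendsto f (nhdsWithin t (Set.Iio t)) (nhds l)

/-- A real function is right-continuous on `[0, T)`. -/
def RCOn (f : ℝ → ℝ) (T : ℝ) : Prop :=
  ∀ t ∈ Set.Ico (0 : ℝ) T, ContinuousWithinAt f (Set.Ici t) t

/-- `τ` is a stopping time for `ℱ` taking values in `[s ·, T]`; for `s = S` a stopping
time this encodes membership in `S_S`. -/
def IsStopIn [m : MeasurableSpace Ω] (ℱ : Filtration ℝ m) (T : ℝ) (s τ : Ω → ℝ) : Prop :=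
  IsStoppingTime ℱ (fun ω => (τ ω : WithTop ℝ)) ∧ (∀ ω, s ω ≤ τ ω) ∧ ∀ ω, τ ω ≤ T

/-- Membership in `S_0`: a stopping time with values in `[0, T]`. -/
def Stop0 [m : MeasurableSpace Ω] (ℱ : Filtration ℝ m) (T : ℝ) (τ : Ω → ℝ) : Prop :=
  IsStopIn ℱ T (fun _ => (0 : ℝ)) τ

/-- `g` is an essential supremum of the family of random variables `s`. -/
def IsEssSupFam [MeasurableSpace Ω] (μ : Measure Ω) (s : Set (Ω → ℝ)) (g : Ω → ℝ) : Prop :=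
  (∀ f ∈ s, f ≤ᵐ[μ] g) ∧ ∀ h : Ω → ℝ, (∀ f ∈ s, f ≤ᵐ[μ] h) → g ≤ᵐ[μ] h

/-- `g` is an essential infimum of the family of random variables `s`. -/
def IsEssInfFam [MeasurableSpace Ω] (μ : Measure Ω) (s : Set (Ω → ℝ)) (g : Ω → ℝ) : Prop :=
  (∀ f ∈ s, g ≤ᵐ[μ] f) ∧ ∀ h : Ω → ℝ, (∀ f ∈ s, h ≤ᵐ[μ] f) → h ≤ᵐ[μ] g

/-- An `𝔽`-consistent nonlinear expectation `(E, Dom(E))` on the horizon `[0, T]`,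
together with its conditional versions at stopping times, satisfying the domain
axioms (D1)-(D3), (A1)-(A4) at stopping times, and hypotheses (H0)-(H5). -/
structure FExp [m : MeasurableSpace Ω] (μ : Measure Ω) (T : ℝ) (ℱ : Filtration ℝ m) where
  /-- the domain `Dom(E)` -/
  Dom : Set (Ω → ℝ)
  /-- `cond τ ξ` is the conditional expectation `E_τ[ξ]` at the stopping time `τ` -/
  cond : (Ω → ℝ) → (Ω → ℝ) → Ω → ℝ
  /-- `E0 ξ` is the (deterministic) value `E[ξ] = E_0[ξ]` -/
  E0 : (Ω → ℝ) → ℝ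
  zero_mem : (fun _ => (0 : ℝ)) ∈ Dom
  one_mem : (fun _ => (1 : ℝ)) ∈ Dom
  /-- (H4): all constants belong to the domain -/
  const_mem : ∀ c : ℝ, (fun _ => c) ∈ Dom
  add_mem : ∀ {ξ η : Ω → ℝ}, ξ ∈ Dom → η ∈ Dom → ξ + η ∈ Dom
  indicator_mem : ∀ {ξ : Ω → ℝ}, ξ ∈ Dom → ∀ {A : Set Ω}, MeasurableSet A →
    A.indicator ξ ∈ Dom
  sandwich_mem : ∀ {ξ η : Ω → ℝ}, η ∈ Dom → (∀ᵐ ω ∂μ, 0 ≤ ξ ω ∧ ξ ω ≤ η ω) → ξ ∈ Dom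
  cond_mem : ∀ {τ ξ : Ω → ℝ}, Stop0 ℱ T τ → ξ ∈ Dom → 0 ≤ᵐ[μ] ξ → cond τ ξ ∈ Dom
  cond_nonneg : ∀ {τ ξ : Ω → ℝ}, Stop0 ℱ T τ → ξ ∈ Dom → 0 ≤ᵐ[μ] ξ → 0 ≤ᵐ[μ] cond τ ξ
  /-- `E_τ[ξ]` is `F_τ`-measurable -/
  cond_adapted : ∀ {τ ξ : Ω → ℝ} (hτ : Stop0 ℱ T τ), ξ ∈ Dom → 0 ≤ᵐ[μ] ξ →
    Measurable[hτ.1.measurableSpace] (cond τ ξ)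
  /-- monotonicity -/
  mono : ∀ {τ ξ η : Ω → ℝ}, Stop0 ℱ T τ → ξ ∈ Dom → 0 ≤ᵐ[μ] ξ → η ∈ Dom → 0 ≤ᵐ[μ] η →
    ξ ≤ᵐ[μ] η → cond τ ξ ≤ᵐ[μ] cond τ η
  /-- strict monotonicity -/
  strict_mono : ∀ {τ ξ η : Ω → ℝ}, Stop0 ℱ T τ → ξ ∈ Dom → 0 ≤ᵐ[μ] ξ → η ∈ Dom →
    0 ≤ᵐ[μ] η → ξ ≤ᵐ[μ] η → cond τ ξ =ᵐ[μ] cond τ η → ξ =ᵐ[μ] η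
  /-- time consistency -/
  time_consistent : ∀ {σ τ ξ : Ω → ℝ}, Stop0 ℱ T σ → Stop0 ℱ T τ → (∀ ω, σ ω ≤ τ ω) →
    ξ ∈ Dom → 0 ≤ᵐ[μ] ξ → cond σ (cond τ ξ) =ᵐ[μ] cond σ ξ
  /-- zero-one law -/
  zero_one : ∀ {τ ξ : Ω → ℝ} (hτ : Stop0 ℱ T τ), ξ ∈ Dom → 0 ≤ᵐ[μ] ξ →
    ∀ {A : Set Ω}, MeasurableSet[hτ.1.measurableSpace] A →
    cond τ (A.indicator ξ) =ᵐ[μ] A.indicator (cond τ ξ)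
  /-- translation invariance -/
  translation : ∀ {τ ξ η : Ω → ℝ} (hτ : Stop0 ℱ T τ), ξ ∈ Dom → 0 ≤ᵐ[μ] ξ → η ∈ Dom →
    0 ≤ᵐ[μ] η → Measurable[hτ.1.measurableSpace] η → cond τ (ξ + η) =ᵐ[μ] cond τ ξ + η
  /-- `F_0` is trivial: `E_0[ξ]` is the constant `E0 ξ` -/
  E0_eq : ∀ {ξ : Ω → ℝ}, ξ ∈ Dom → 0 ≤ᵐ[μ] ξ →
    cond (fun _ => (0 : ℝ)) ξ =ᵐ[μ] fun _ => E0 ξ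
  /-- the process `t ↦ E_t[ξ]` has RCLL paths -/
  rcll_paths : ∀ {ξ : Ω → ℝ}, ξ ∈ Dom → 0 ≤ᵐ[μ] ξ →
    ∀ᵐ ω ∂μ, RCLLOn (fun t => cond (fun _ => t) ξ ω) T
  /-- (H0) -/
  h0 : ∀ {A : Set Ω}, MeasurableSet A → 0 < μ A →
    Tendsto (fun n : ℕ => E0 (A.indicator fun _ => (n : ℝ))) atTop atTop
  /-- (H1) -/
  h1 : ∀ {ξ : Ω → ℝ}, ξ ∈ Dom → 0 ≤ᵐ[μ] ξ → ∀ {A : ℕ → Set Ω},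
    (∀ n, MeasurableSet (A n)) → Monotone A → (∀ᵐ ω ∂μ, ω ∈ ⋃ n, A n) →
    Tendsto (fun n => E0 ((A n).indicator ξ)) atTop (nhds (E0 ξ))
  /-- (H2) -/
  h2 : ∀ {ξ η : Ω → ℝ}, ξ ∈ Dom → 0 ≤ᵐ[μ] ξ → η ∈ Dom → 0 ≤ᵐ[μ] η →
    ∀ {A : ℕ → Set Ω}, (∀ n, MeasurableSet (A n)) → Antitone A →
    (∀ᵐ ω ∂μ, ω ∉ ⋂ n, A n) →
    Tendsto (fun n => E0 (ξ + (A n).indicator η)) atTop (nhds (E0 ξ))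
  /-- (H5) -/
  h5 : ∀ {ξ : ℕ → Ω → ℝ} {ζ : Ω → ℝ}, (∀ n, ξ n ∈ Dom) → (∀ n, 0 ≤ᵐ[μ] ξ n) →
    (∀ᵐ ω ∂μ, Tendsto (fun n => ξ n ω) atTop (nhds (ζ ω))) →
    (∃ C : ℝ, ∃ᶠ n in atTop, E0 (ξ n) ≤ C) → ζ ∈ Dom

variable [m : MeasurableSpace Ω] {μ : Measure Ω} {T : ℝ} {ℱ : Filtration ℝ m}

/-- (H6): sub-additivity. -/
def FExp.Subadditive (𝔈 : FExp μ T ℱ) : Prop :=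
  ∀ ⦃τ ξ η : Ω → ℝ⦄, Stop0 ℱ T τ → ξ ∈ 𝔈.Dom → 0 ≤ᵐ[μ] ξ → η ∈ 𝔈.Dom → 0 ≤ᵐ[μ] η →
    𝔈.cond τ (ξ + η) ≤ᵐ[μ] 𝔈.cond τ ξ + 𝔈.cond τ η

/-- (H7): positive homogeneity. -/
def FExp.PosHom (𝔈 : FExp μ T ℱ) : Prop :=
  ∀ ⦃τ ξ : Ω → ℝ⦄ (l : ℝ), 0 ≤ l → Stop0 ℱ T τ → ξ ∈ 𝔈.Dom → 0 ≤ᵐ[μ] ξ →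
    𝔈.cond τ (fun ω => l * ξ ω) =ᵐ[μ] fun ω => l * 𝔈.cond τ ξ ω

/-- Admissible family of rewards indexed by stopping times. -/
def Admissible (𝔈 : FExp μ T ℱ) (X : (Ω → ℝ) → Ω → ℝ) : Prop :=
  (∀ τ : Ω → ℝ, ∀ hτ : Stop0 ℱ T τ, X τ ∈ 𝔈.Dom ∧ 0 ≤ᵐ[μ] X τ ∧
      Measurable[hτ.1.measurableSpace] (X τ)) ∧
    ∀ τ σ : Ω → ℝ, Stop0 ℱ T τ → Stop0 ℱ T σ →
      ∀ᵐ ω ∂μ, τ ω = σ ω → X τ ω = X σ ω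

/-- `sup_{τ ∈ S_0} E[X(τ)] < ∞`. -/
def BddRewardE0 (𝔈 : FExp μ T ℱ) (X : (Ω → ℝ) → Ω → ℝ) : Prop :=
  ∃ C : ℝ, ∀ τ : Ω → ℝ, Stop0 ℱ T τ → 𝔈.E0 (X τ) ≤ C

/-- `v` is the value function family of the single stopping problem for the reward `X`:
`v(S) = esssup_{τ ∈ S_S} E_S[X(τ)]`. -/
def IsValueFam (𝔈 : FExp μ T ℱ) (X v : (Ω → ℝ) → Ω → ℝ) : Prop :=
  ∀ S : Ω → ℝ, Stop0 ℱ T S →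
    IsEssSupFam μ {g | ∃ τ : Ω → ℝ, IsStopIn ℱ T S τ ∧ g = 𝔈.cond S (X τ)} (v S)

/-- An `E`-supermartingale system. -/
def SupermartSys (𝔈 : FExp μ T ℱ) (h : (Ω → ℝ) → Ω → ℝ) : Prop :=
  (∀ τ : Ω → ℝ, ∀ hτ : Stop0 ℱ T τ, h τ ∈ 𝔈.Dom ∧ 0 ≤ᵐ[μ] h τ ∧
      Measurable[hτ.1.measurableSpace] (h τ)) ∧
    ∀ τ σ : Ω → ℝ, Stop0 ℱ T τ → Stop0 ℱ T σ → (∀ᵐ ω ∂μ, τ ω ≤ σ ω) →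
      𝔈.cond τ (h σ) ≤ᵐ[μ] h τ

/-- Right-continuity along stopping times in `E`-expectation (RCE). -/
def RCE (𝔈 : FExp μ T ℱ) (X : (Ω → ℝ) → Ω → ℝ) : Prop :=
  ∀ τ : Ω → ℝ, Stop0 ℱ T τ → ∀ τs : ℕ → Ω → ℝ, (∀ n, Stop0 ℱ T (τs n)) →
    (∀ᵐ ω ∂μ, Antitone (fun n => τs n ω) ∧
      Tendsto (fun n => τs n ω) atTop (nhds (τ ω))) →
    Tendsto (fun n => 𝔈.E0 (X (τs n))) atTop (nhds (𝔈.E0 (X τ)))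

/-- Left-continuity along stopping times in `E`-expectation (LCE). -/
def LCE (𝔈 : FExp μ T ℱ) (X : (Ω → ℝ) → Ω → ℝ) : Prop :=
  ∀ τ : Ω → ℝ, Stop0 ℱ T τ → ∀ τs : ℕ → Ω → ℝ, (∀ n, Stop0 ℱ T (τs n)) →
    (∀ᵐ ω ∂μ, Monotone (fun n => τs n ω) ∧
      Tendsto (fun n => τs n ω) atTop (nhds (τ ω))) →
    Tendsto (fun n => 𝔈.E0 (X (τs n))) atTop (nhds (𝔈.E0 (X τ)))

/-- Continuity along stopping times in `E`-expectation (CE). -/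
def CE (𝔈 : FExp μ T ℱ) (X : (Ω → ℝ) → Ω → ℝ) : Prop :=
  RCE 𝔈 X ∧ LCE 𝔈 X

/-- Right-continuity along stopping times (RC): a.s. pointwise convergence. -/
def RCfam (𝔈 : FExp μ T ℱ) (X : (Ω → ℝ) → Ω → ℝ) : Prop :=
  ∀ τ : Ω → ℝ, Stop0 ℱ T τ → ∀ τs : ℕ → Ω → ℝ, (∀ n, Stop0 ℱ T (τs n)) →
    (∀ᵐ ω ∂μ, Antitone (fun n => τs n ω) ∧
      Tendsto (fun n => τs n ω) atTop (nhds (τ ω))) →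
    ∀ᵐ ω ∂μ, Tendsto (fun n => X (τs n) ω) atTop (nhds (X τ ω))

/-- Biadmissible family of rewards indexed by pairs of stopping times. -/
def Biadmissible (𝔈 : FExp μ T ℱ) (X : (Ω → ℝ) → (Ω → ℝ) → Ω → ℝ) : Prop :=
  (∀ τ σ : Ω → ℝ, ∀ hτ : Stop0 ℱ T τ, ∀ hσ : Stop0 ℱ T σ,
      X τ σ ∈ 𝔈.Dom ∧ 0 ≤ᵐ[μ] X τ σ ∧
      Measurable[(hτ.1.max hσ.1).measurableSpace] (X τ σ)) ∧
    ∀ τ σ τ' σ' : Ω → ℝ, Stop0 ℱ T τ → Stop0 ℱ T σ → Stop0 ℱ T τ' → Stop0 ℱ T σ' →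
      ∀ᵐ ω ∂μ, τ ω = τ' ω → σ ω = σ' ω → X τ σ ω = X τ' σ' ω

/-- `sup_{τ,σ ∈ S_0} E[X(τ,σ)] < ∞`. -/
def BddReward2E0 (𝔈 : FExp μ T ℱ) (X : (Ω → ℝ) → (Ω → ℝ) → Ω → ℝ) : Prop :=
  ∃ C : ℝ, ∀ τ σ : Ω → ℝ, Stop0 ℱ T τ → Stop0 ℱ T σ → 𝔈.E0 (X τ σ) ≤ C

/-- `v` is the value function family of the double stopping problem:
`v(S) = esssup_{τ₁,τ₂ ∈ S_S} E_S[X(τ₁,τ₂)]`. -/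
def IsValueFam2 (𝔈 : FExp μ T ℱ) (X : (Ω → ℝ) → (Ω → ℝ) → Ω → ℝ)
    (v : (Ω → ℝ) → Ω → ℝ) : Prop :=
  ∀ S : Ω → ℝ, Stop0 ℱ T S →
    IsEssSupFam μ
      {g | ∃ τ₁ τ₂ : Ω → ℝ, IsStopIn ℱ T S τ₁ ∧ IsStopIn ℱ T S τ₂ ∧
        g = 𝔈.cond S (X τ₁ τ₂)} (v S)

/-- `u₁(θ) = esssup_{τ₁ ∈ S_θ} E_θ[X(τ₁, θ)]`. -/
def IsU1 (𝔈 : FExp μ T ℱ) (X : (Ω → ℝ) → (Ω → ℝ) → Ω → ℝ) (u₁ : (Ω → ℝ) → Ω → ℝ) : Prop :=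
  ∀ θ : Ω → ℝ, Stop0 ℱ T θ →
    IsEssSupFam μ {g | ∃ τ : Ω → ℝ, IsStopIn ℱ T θ τ ∧ g = 𝔈.cond θ (X τ θ)} (u₁ θ)

/-- `u₂(θ) = esssup_{τ₂ ∈ S_θ} E_θ[X(θ, τ₂)]`. -/
def IsU2 (𝔈 : FExp μ T ℱ) (X : (Ω → ℝ) → (Ω → ℝ) → Ω → ℝ) (u₂ : (Ω → ℝ) → Ω → ℝ) : Prop :=
  ∀ θ : Ω → ℝ, Stop0 ℱ T θ →
    IsEssSupFam μ {g | ∃ τ : Ω → ℝ, IsStopIn ℱ T θ τ ∧ g = 𝔈.cond θ (X θ τ)} (u₂ θ)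

/-- Uniform right-continuity of a biadmissible family along stopping times in
`ℰ`-expectation (URCℰ). -/
def URCE2 (ℰ : FExp μ T ℱ) (X : (Ω → ℝ) → (Ω → ℝ) → Ω → ℝ) : Prop :=
  ∀ σ : Ω → ℝ, Stop0 ℱ T σ → ∀ σs : ℕ → Ω → ℝ, (∀ n, Stop0 ℱ T (σs n)) →
    (∀ᵐ ω ∂μ, Antitone (fun n => σs n ω) ∧
      Tendsto (fun n => σs n ω) atTop (nhds (σ ω))) →
    ∀ ε : ℝ, 0 < ε → ∃ N : ℕ, ∀ n ≥ N, ∀ τ : Ω → ℝ, Stop0 ℱ T τ →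
      ℰ.E0 (fun ω => |X τ σ ω - X τ (σs n) ω|) ≤ ε ∧
      ℰ.E0 (fun ω => |X σ τ ω - X (σs n) τ ω|) ≤ ε

/-- Uniform left-continuity of a biadmissible family along stopping times in
`ℰ`-expectation (ULCℰ). -/
def ULCE2 (ℰ : FExp μ T ℱ) (X : (Ω → ℝ) → (Ω → ℝ) → Ω → ℝ) : Prop :=
  ∀ σ : Ω → ℝ, Stop0 ℱ T σ → ∀ σs : ℕ → Ω → ℝ, (∀ n, Stop0 ℱ T (σs n)) →
    (∀ᵐ ω ∂μ, Monotone (fun n => σs n ω) ∧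
      Tendsto (fun n => σs n ω) atTop (nhds (σ ω))) →
    ∀ ε : ℝ, 0 < ε → ∃ N : ℕ, ∀ n ≥ N, ∀ τ : Ω → ℝ, Stop0 ℱ T τ →
      ℰ.E0 (fun ω => |X τ σ ω - X τ (σs n) ω|) ≤ ε ∧
      ℰ.E0 (fun ω => |X σ τ ω - X (σs n) τ ω|) ≤ ε

/-- Uniform continuity (UCℰ) of a biadmissible family. -/
def UCE2 (ℰ : FExp μ T ℱ) (X : (Ω → ℝ) → (Ω → ℝ) → Ω → ℝ) : Prop :=
  URCE2 ℰ X ∧ ULCE2 ℰ X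

/-- `(E, Dom(E))` is dominated by `(Ẽ, Dom(Ẽ))`. -/
def Dominated (𝔈 𝔉 : FExp μ T ℱ) : Prop :=
  𝔈.Dom ⊆ 𝔉.Dom ∧
    ∀ τ : Ω → ℝ, Stop0 ℱ T τ → ∀ ξ η : Ω → ℝ, ξ ∈ 𝔈.Dom → η ∈ 𝔈.Dom →
      ∀ᵐ ω ∂μ, 𝔈.cond τ (ξ + η) ω - 𝔈.cond τ η ω ≤ 𝔉.cond τ ξ ω

/-- The filtration contains all `μ`-null sets (part of the usual conditions). -/
def CompleteFiltration (μ : Measure Ω) (ℱ : Filtration ℝ m) : Prop :=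
  ∀ s : Set Ω, μ s = 0 → ∀ t : ℝ, MeasurableSet[ℱ t] s

/-- The filtration is right-continuous (part of the usual conditions). -/
def RightContinuousFiltration (ℱ : Filtration ℝ m) : Prop :=
  ∀ t : ℝ, (ℱ t : MeasurableSpace Ω) = ⨅ u ∈ Set.Ioi t, ℱ u

/-- A `d`-tuple of stopping times, all in `S_s`. -/
def StopVec (ℱ : Filtration ℝ m) (T : ℝ) (s : Ω → ℝ) {d : ℕ} (τ : Fin d → Ω → ℝ) : Prop :=
  ∀ i, IsStopIn ℱ T s (τ i)

/-- A `d`-admissible family of rewards. -/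
def DAdmissible (𝔈 : FExp μ T ℱ) {d : ℕ} (X : (Fin d → Ω → ℝ) → Ω → ℝ) : Prop :=
  (∀ τ : Fin d → Ω → ℝ, StopVec ℱ T (fun _ => (0 : ℝ)) τ →
      X τ ∈ 𝔈.Dom ∧ 0 ≤ᵐ[μ] X τ ∧
      ∀ h : IsStoppingTime ℱ fun ω => (((⨆ i, τ i ω : ℝ)) : WithTop ℝ),
        Measurable[h.measurableSpace] (X τ)) ∧
    ∀ τ σ : Fin d → Ω → ℝ, StopVec ℱ T (fun _ => (0 : ℝ)) τ →
      StopVec ℱ T (fun _ => (0 : ℝ)) σ →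
      ∀ᵐ ω ∂μ, (∀ i, τ i ω = σ i ω) → X τ ω = X σ ω

/-- `sup_{τ ∈ S_0^d} E[X(τ)] < ∞`. -/
def BddRewardDE0 (𝔈 : FExp μ T ℱ) {d : ℕ} (X : (Fin d → Ω → ℝ) → Ω → ℝ) : Prop :=
  ∃ C : ℝ, ∀ τ : Fin d → Ω → ℝ, StopVec ℱ T (fun _ => (0 : ℝ)) τ → 𝔈.E0 (X τ) ≤ C

/-- `v` is the value function family of the `d`-stopping problem:
`v(S) = esssup_{τ ∈ S_S^d} E_S[X(τ)]`. -/
def IsValueFamD (𝔈 : FExp μ T ℱ) {d : ℕ} (X : (Fin d → Ω → ℝ) → Ω → ℝ)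
    (v : (Ω → ℝ) → Ω → ℝ) : Prop :=
  ∀ S : Ω → ℝ, Stop0 ℱ T S →
    IsEssSupFam μ
      {g | ∃ τ : Fin d → Ω → ℝ, StopVec ℱ T S τ ∧ g = 𝔈.cond S (X τ)} (v S)

/-- `u^{(i)}(θ) = esssup_{τ ∈ S_θ^{d-1}} E_θ[X^{(i)}(τ, θ)]`, where `X^{(i)}(τ, θ)`
inserts `θ` in the `i`-th slot. -/
def IsUi (𝔈 : FExp μ T ℱ) {d : ℕ} (X : (Fin (d + 1) → Ω → ℝ) → Ω → ℝ)
    (ui : Fin (d + 1) → (Ω → ℝ) → Ω → ℝ) : Prop :=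
  ∀ i : Fin (d + 1), ∀ θ : Ω → ℝ, Stop0 ℱ T θ →
    IsEssSupFam μ
      {g | ∃ τ : Fin d → Ω → ℝ, StopVec ℱ T θ τ ∧ g = 𝔈.cond θ (X (i.insertNth θ τ))}
      (ui i θ)

/-- Uniform continuity (UCE) of a `d`-admissible family along monotone sequences of
stopping times. -/
def UCED (𝔈 : FExp μ T ℱ) {d : ℕ} (X : (Fin (d + 1) → Ω → ℝ) → Ω → ℝ) : Prop :=
  ∀ i : Fin (d + 1), ∀ S : Ω → ℝ, Stop0 ℱ T S → ∀ Ss : ℕ → Ω → ℝ,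
    (∀ n, Stop0 ℱ T (Ss n)) →
    ((∀ᵐ ω ∂μ, Monotone fun n => Ss n ω) ∨ (∀ᵐ ω ∂μ, Antitone fun n => Ss n ω)) →
    (∀ᵐ ω ∂μ, Tendsto (fun n => Ss n ω) atTop (nhds (S ω))) →
    ∀ ε : ℝ, 0 < ε → ∃ N : ℕ, ∀ n ≥ N, ∀ θ : Fin d → Ω → ℝ,
      StopVec ℱ T (fun _ => (0 : ℝ)) θ →
      𝔈.E0 (fun ω => |X (i.insertNth (Ss n) θ) ω - X (i.insertNth S θ) ω|) ≤ ε

/-!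
Let `σₙ` be `λ`-optimal stopping times decreasing to `tl = τ^λ(S)`; they exist because the
`λ`-optimal times in `S_S` are closed under `min`, and they make `tl` a stopping time.

* `λ E[v(tl)] ≤ E[X(tl)]`: for `ρ ≥ tl`, `λ E[X(ρ ∨ σₙ)] ≤ λ E[v(σₙ)] ≤ E[X(σₙ)]`, and right
  continuity in expectation gives `λ E[X(ρ)] ≤ E[X(tl)]` in the limit.
* `v(S) ≤ E_S[v(tl)]`: for `ρ ≥ S`, stopping at `ρ` where `λ v(ρ) ≤ X(ρ)` and at `T` elsewhere is
  `λ`-optimal, hence after `tl`. This yields `X(ρ) ≤ λ v(ρ) + (1 - λ) E_ρ[v(π)]` for a stopping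
  time `π ≥ tl`, and sublinearity with the supermartingale property of `v` turns it into
  `E_S[X(ρ)] ≤ λ v(S) + (1 - λ) E_S[v(tl)]`.

Essential suprema and infima of directed families are monotone limits of sequences from the family:
maximise `∫ arctan f` over the family.
-/

open scoped Topology

section StoppingTimes

variable {τ σ θ κ : Ω → ℝ}

lemma IsStopIn.stop0 (hκ : Stop0 ℱ T κ) (h : IsStopIn ℱ T κ τ) : Stop0 ℱ T τ :=
  ⟨h.1, fun ω => (hκ.2.1 ω).trans (h.2.1 ω), h.2.2⟩

lemma IsStopIn.mono (h : IsStopIn ℱ T σ τ) (hκσ : ∀ ω, κ ω ≤ σ ω) : IsStopIn ℱ T κ τ :=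
  ⟨h.1, fun ω => (hκσ ω).trans (h.2.1 ω), h.2.2⟩

lemma IsStopIn.min (hτ : IsStopIn ℱ T κ τ) (hσ : IsStopIn ℱ T κ σ) :
    IsStopIn ℱ T κ fun ω => min (τ ω) (σ ω) :=
  ⟨hτ.1.min hσ.1, fun ω => le_min (hτ.2.1 ω) (hσ.2.1 ω),
    fun ω => (min_le_left _ _).trans (hτ.2.2 ω)⟩

lemma Stop0.isStopIn_self (hτ : Stop0 ℱ T τ) : IsStopIn ℱ T τ τ :=
  ⟨hτ.1, fun _ => le_rfl, hτ.2.2⟩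

lemma Stop0.isStopIn_const (hκ : Stop0 ℱ T κ) : IsStopIn ℱ T κ fun _ => T :=
  ⟨isStoppingTime_const ℱ T, hκ.2.2, fun _ => le_rfl⟩

lemma Stop0.isStopIn_max (hτ : Stop0 ℱ T τ) (hσ : Stop0 ℱ T σ) :
    IsStopIn ℱ T σ fun ω => max (τ ω) (σ ω) :=
  ⟨hτ.1.max hσ.1, fun _ => le_max_right _ _, fun ω => max_le (hτ.2.2 ω) (hσ.2.2 ω)⟩

lemma stop0_const {c : ℝ} (hc : 0 ≤ c) (hcT : c ≤ T) : Stop0 ℱ T fun _ => c :=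
  ⟨isStoppingTime_const ℱ c, fun _ => hc, fun _ => hcT⟩

lemma measurableSet_le_of_isStoppingTime (hτ : IsStoppingTime ℱ fun ω => (τ ω : WithTop ℝ))
    (t : ℝ) : MeasurableSet[ℱ t] {ω | τ ω ≤ t} := by
  simpa using hτ t

lemma Stop0.measurable (hτ : Stop0 ℱ T τ) : Measurable τ :=
  measurable_of_Iic fun t => ℱ.le t _ (measurableSet_le_of_isStoppingTime hτ.1 t)

lemma isStoppingTime_of_ae_eq (hcf : CompleteFiltration μ ℱ)
    (hσ : IsStoppingTime ℱ fun ω => (σ ω : WithTop ℝ)) (h : τ =ᵐ[μ] σ) :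
    IsStoppingTime ℱ fun ω => (τ ω : WithTop ℝ) := by
  set N := {ω | τ ω ≠ σ ω}
  have hN : μ N = 0 := ae_iff.mp h
  intro t
  have hsplit : {ω | (τ ω : WithTop ℝ) ≤ t} = ({ω | σ ω ≤ t} \ N) ∪ ({ω | τ ω ≤ t} ∩ N) := by
    ext ω
    by_cases hω : τ ω = σ ω <;> simp [N, hω]
  rw [hsplit]
  exact ((measurableSet_le_of_isStoppingTime hσ t).diff (hcf N hN t)).union
    (hcf _ (measure_mono_null Set.inter_subset_right hN) t)

lemma isStoppingTime_iInf (hrcf : RightContinuousFiltration ℱ) {τs : ℕ → Ω → ℝ}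
    (hτs : ∀ n, IsStoppingTime ℱ fun ω => (τs n ω : WithTop ℝ))
    (hbdd : ∀ ω, BddBelow (Set.range fun n => τs n ω)) :
    IsStoppingTime ℱ fun ω => ((⨅ n, τs n ω : ℝ) : WithTop ℝ) := by
  have : ℱ.IsRightContinuous := ⟨fun t => by
    rw [Filtration.rightCont_eq_of_neBot_nhdsGT, hrcf t]; rfl⟩
  refine isStoppingTime_of_measurableSet_lt_of_isRightContinuous fun t => ?_
  have hlt : {ω | ((⨅ n, τs n ω : ℝ) : WithTop ℝ) < t} = ⋃ n, {ω | (τs n ω : WithTop ℝ) < t} := by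
    ext ω
    simp [ciInf_lt_iff (hbdd ω)]
  rw [hlt]
  exact MeasurableSet.iUnion fun n => (hτs n).measurableSet_lt t

lemma isStoppingTime_of_tendsto (hcf : CompleteFiltration μ ℱ)
    (hrcf : RightContinuousFiltration ℱ) {τs : ℕ → Ω → ℝ}
    (hτs : ∀ n, IsStoppingTime ℱ fun ω => (τs n ω : WithTop ℝ))
    (hbdd : ∀ ω, BddBelow (Set.range fun n => τs n ω))
    (hlim : ∀ᵐ ω ∂μ, Antitone (fun n => τs n ω) ∧ Tendsto (fun n => τs n ω) atTop (𝓝 (τ ω))) :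
    IsStoppingTime ℱ fun ω => (τ ω : WithTop ℝ) :=
  isStoppingTime_of_ae_eq hcf (isStoppingTime_iInf hrcf hτs hbdd)
    (hlim.mono fun _ h => (isGLB_of_tendsto_atTop h.1 h.2).ciInf_eq.symm)

lemma isStopIn_piecewise {ρ₁ ρ₂ : Ω → ℝ} (hθ : IsStoppingTime ℱ fun ω => (θ ω : WithTop ℝ))
    {C : Set Ω} [DecidablePred (· ∈ C)] (hC : MeasurableSet[hθ.measurableSpace] C)
    (h₁ : Stop0 ℱ T ρ₁) (h₂ : Stop0 ℱ T ρ₂) (hle₁ : ∀ ω ∈ C, θ ω ≤ ρ₁ ω)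
    (hle₂ : ∀ ω ∉ C, θ ω ≤ ρ₂ ω) : IsStopIn ℱ T θ (C.piecewise ρ₁ ρ₂) := by
  refine ⟨fun t => ?_, fun ω => ?_, fun ω => ?_⟩
  · have hsplit : {ω | (C.piecewise ρ₁ ρ₂ ω : WithTop ℝ) ≤ t} =
        (C ∩ {ω | θ ω ≤ t}) ∩ {ω | ρ₁ ω ≤ t} ∪ (Cᶜ ∩ {ω | θ ω ≤ t}) ∩ {ω | ρ₂ ω ≤ t} := by
      ext ω
      by_cases hω : ω ∈ C
      · simpa [hω] using fun h => (hle₁ ω hω).trans h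
      · simpa [hω] using fun h => (hle₂ ω hω).trans h
    rw [hsplit]
    have hCt := (hθ.measurableSet C).mp hC
    have hCct := (hθ.measurableSet Cᶜ).mp hC.compl
    simp only [WithTop.coe_le_coe] at hCt hCct
    exact ((hCt.2 t).inter (measurableSet_le_of_isStoppingTime h₁.1 t)).union
      ((hCct.2 t).inter (measurableSet_le_of_isStoppingTime h₂.1 t))
  · by_cases hω : ω ∈ C
    · simpa [hω] using hle₁ ω hω
    · simpa [hω] using hle₂ ω hω
  · by_cases hω : ω ∈ C
    · simpa [hω] using h₁.2.2 ω
    · simpa [hω] using h₂.2.2 ω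

lemma measurableSet_inter_of_eq_on (hθ : IsStoppingTime ℱ fun ω => (θ ω : WithTop ℝ))
    (hτ : IsStoppingTime ℱ fun ω => (τ ω : WithTop ℝ)) {D E : Set Ω}
    (hD : MeasurableSet[hθ.measurableSpace] D) (hθτ : ∀ ω ∈ D, θ ω = τ ω)
    (hE : MeasurableSet[hτ.measurableSpace] E) : MeasurableSet[hθ.measurableSpace] (D ∩ E) := by
  rw [hθ.measurableSet] at hD ⊢
  rw [hτ.measurableSet] at hE
  refine ⟨hD.1.inter hE.1, fun t => ?_⟩
  have hsplit : D ∩ E ∩ {ω | (θ ω : WithTop ℝ) ≤ t} =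
      (D ∩ {ω | (θ ω : WithTop ℝ) ≤ t}) ∩ (E ∩ {ω | (τ ω : WithTop ℝ) ≤ t}) := by
    ext ω
    constructor
    · rintro ⟨⟨hωD, hωE⟩, hω⟩
      exact ⟨⟨hωD, hω⟩, hωE, by simpa [← hθτ ω hωD] using hω⟩
    · rintro ⟨⟨hωD, hω⟩, hωE, -⟩
      exact ⟨⟨hωD, hωE⟩, hω⟩
  rw [hsplit]
  exact (hD.2 t).inter (hE.2 t)

lemma measurable_indicator_of_eq_on {f : Ω → ℝ}
    (hθ : IsStoppingTime ℱ fun ω => (θ ω : WithTop ℝ))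
    (hτ : IsStoppingTime ℱ fun ω => (τ ω : WithTop ℝ)) {D : Set Ω}
    (hD : MeasurableSet[hθ.measurableSpace] D) (hθτ : ∀ ω ∈ D, θ ω = τ ω)
    (hf : Measurable[hτ.measurableSpace] f) : Measurable[hθ.measurableSpace] (D.indicator f) := by
  intro B hB
  rw [Set.indicator_preimage, Set.ite, Set.inter_comm]
  exact (measurableSet_inter_of_eq_on hθ hτ hD hθτ (hf hB)).union
    (((measurable_const : Measurable[hθ.measurableSpace] fun _ : Ω => (0 : ℝ)) hB).diff hD)

end StoppingTimes

section EssSup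

open Real

lemma exists_ae_monotone_majorant {s : Set (Ω → ℝ)}
    (hdir : ∀ f ∈ s, ∀ f' ∈ s, ∃ h ∈ s, (fun ω => max (f ω) (f' ω)) ≤ᵐ[μ] h)
    {f : ℕ → Ω → ℝ} (hf : ∀ n, f n ∈ s) :
    ∃ fs : ℕ → Ω → ℝ, (∀ n, fs n ∈ s) ∧ (∀ n, f n ≤ᵐ[μ] fs n) ∧ ∀ n, fs n ≤ᵐ[μ] fs (n + 1) := by
  choose! d hd_mem hd_le using hdir
  let fs : ℕ → Ω → ℝ := fun n => Nat.rec (f 0) (fun k fk => d fk (f (k + 1))) n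
  have hfs_succ : ∀ n, fs (n + 1) = d (fs n) (f (n + 1)) := fun n => rfl
  have hfs_mem : ∀ n, fs n ∈ s := by
    intro n
    induction n with
    | zero => exact hf 0
    | succ k ih => exact hfs_succ k ▸ hd_mem _ ih _ (hf _)
  refine ⟨fs, hfs_mem, ?_, fun n => ?_⟩
  · rintro (_ | k)
    · exact ae_of_all _ fun _ => le_rfl
    · exact (hd_le _ (hfs_mem k) _ (hf _)).mono fun _ hω => (le_max_right _ _).trans hω
  · exact (hd_le _ (hfs_mem n) _ (hf _)).mono fun _ hω => (le_max_left _ _).trans hω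

variable [IsFiniteMeasure μ]

lemma abs_arctan_le (x : ℝ) : |arctan x| ≤ π / 2 :=
  abs_le.2 ⟨(neg_pi_div_two_lt_arctan x).le, (arctan_lt_pi_div_two x).le⟩

lemma integrable_arctan_comp {f : Ω → ℝ} (hf : Measurable f) :
    Integrable (fun ω => arctan (f ω)) μ :=
  (integrable_const (π / 2)).mono' (measurable_arctan.comp hf).aestronglyMeasurable
    (ae_of_all _ fun ω => abs_arctan_le (f ω))

lemma integral_arctan_comp_mono {f g : Ω → ℝ} (hf : Measurable f) (hg : Measurable g)
    (h : f ≤ᵐ[μ] g) : ∫ ω, arctan (f ω) ∂μ ≤ ∫ ω, arctan (g ω) ∂μ :=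
  integral_mono_ae (integrable_arctan_comp hf) (integrable_arctan_comp hg)
    (h.mono fun _ hω => arctan_strictMono.monotone hω)

lemma tendsto_integral_arctan_comp {fs : ℕ → Ω → ℝ} {f : Ω → ℝ} (hfs : ∀ n, Measurable (fs n))
    (h : ∀ᵐ ω ∂μ, Tendsto (fun n => fs n ω) atTop (𝓝 (f ω))) :
    Tendsto (fun n => ∫ ω, arctan (fs n ω) ∂μ) atTop (𝓝 (∫ ω, arctan (f ω) ∂μ)) :=
  tendsto_integral_of_dominated_convergence (fun _ => π / 2)
    (fun n => (measurable_arctan.comp (hfs n)).aestronglyMeasurable) (integrable_const _)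
    (fun n => ae_of_all _ fun ω => abs_arctan_le (fs n ω))
    (h.mono fun _ hω => (continuous_arctan.tendsto _).comp hω)

lemma ae_le_of_integral_arctan_max_le {f g : Ω → ℝ} (hf : Measurable f) (hg : Measurable g)
    (h : ∫ ω, arctan (max (g ω) (f ω)) ∂μ ≤ ∫ ω, arctan (g ω) ∂μ) : f ≤ᵐ[μ] g := by
  have hle : g ≤ᵐ[μ] fun ω => max (g ω) (f ω) := ae_of_all _ fun _ => le_max_left _ _
  have heq := (integral_eq_iff_of_ae_le (integrable_arctan_comp hg)
    (integrable_arctan_comp (hg.max hf)) (hle.mono fun _ hω => arctan_strictMono.monotone hω)).1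
    (le_antisymm (integral_arctan_comp_mono hg (hg.max hf) hle) h)
  filter_upwards [heq] with ω hω
  exact max_eq_left_iff.1 (arctan_injective hω).symm

theorem IsEssSupFam.exists_monotone_tendsto {s : Set (Ω → ℝ)} {g : Ω → ℝ}
    (hg : IsEssSupFam μ s g) (hs : ∀ f ∈ s, Measurable f) (hne : s.Nonempty)
    (hdir : ∀ f ∈ s, ∀ f' ∈ s, ∃ h ∈ s, (fun ω => max (f ω) (f' ω)) ≤ᵐ[μ] h) :
    ∃ fs : ℕ → Ω → ℝ, (∀ n, fs n ∈ s) ∧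
      ∀ᵐ ω ∂μ, Monotone (fun n => fs n ω) ∧ Tendsto (fun n => fs n ω) atTop (𝓝 (g ω)) := by
  set J : (Ω → ℝ) → ℝ := fun f => ∫ ω, arctan (f ω) ∂μ
  have hJbdd : BddAbove (J '' s) := by
    refine ⟨∫ _, π / 2 ∂μ, ?_⟩
    rintro _ ⟨f, hf, rfl⟩
    exact integral_mono (integrable_arctan_comp (hs f hf)) (integrable_const _)
      fun ω => (arctan_lt_pi_div_two _).le
  obtain ⟨u, -, hu_lim, hu_mem⟩ := exists_seq_tendsto_sSup (hne.image J) hJbdd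
  choose f hf_mem hf_eq using hu_mem
  obtain ⟨fs, hfs_mem, hf_le_fs, hstep⟩ := exists_ae_monotone_majorant hdir hf_mem
  have hfs_meas : ∀ n, Measurable (fs n) := fun n => hs _ (hfs_mem n)
  have hJ_le : ∀ h ∈ s, J h ≤ sSup (J '' s) := fun h hh => le_csSup hJbdd ⟨h, hh, rfl⟩
  set G : Ω → ℝ := fun ω => ⨆ n, fs n ω
  have hGm : Measurable G := Measurable.iSup hfs_meas
  have hG : ∀ᵐ ω ∂μ, Monotone (fun n => fs n ω) ∧ Tendsto (fun n => fs n ω) atTop (𝓝 (G ω)) ∧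
      G ω ≤ g ω := by
    filter_upwards [ae_all_iff.2 hstep, ae_all_iff.2 fun n => hg.1 _ (hfs_mem n)]
      with ω hstepω hgω
    have hmono : Monotone fun n => fs n ω := monotone_nat_of_le_succ hstepω
    have hbdd : BddAbove (Set.range fun n => fs n ω) := ⟨g ω, Set.forall_mem_range.2 hgω⟩
    exact ⟨hmono, tendsto_atTop_ciSup hmono hbdd, ciSup_le hgω⟩
  have hJG : J G = sSup (J '' s) := by
    have hlim := tendsto_integral_arctan_comp hfs_meas (hG.mono fun _ hω => hω.2.1)
    refine le_antisymm (le_of_tendsto' hlim fun n => hJ_le _ (hfs_mem n)) ?_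
    refine le_of_tendsto_of_tendsto' hu_lim hlim fun n => ?_
    rw [← hf_eq]
    exact integral_arctan_comp_mono (hs _ (hf_mem n)) (hfs_meas n) (hf_le_fs n)
  -- adjoining any `f'` to `G` cannot raise `J` above its supremum, which `G` already attains
  have hupper : ∀ f' ∈ s, f' ≤ᵐ[μ] G := by
    intro f' hf'
    refine ae_le_of_integral_arctan_max_le (hs f' hf') hGm ?_
    change _ ≤ J G
    rw [hJG]
    refine le_of_tendsto' (tendsto_integral_arctan_comp (fun n => (hfs_meas n).max (hs f' hf'))
      (hG.mono fun _ hω => hω.2.1.max tendsto_const_nhds)) fun n => ?_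
    obtain ⟨h, hh, hle⟩ := hdir _ (hfs_mem n) f' hf'
    exact (integral_arctan_comp_mono ((hfs_meas n).max (hs f' hf')) (hs h hh) hle).trans
      (hJ_le h hh)
  refine ⟨fs, hfs_mem, ?_⟩
  filter_upwards [hG, hg.2 G hupper] with ω ⟨hmono, hlim, hGg⟩ hgG
  exact ⟨hmono, le_antisymm hGg hgG ▸ hlim⟩

theorem IsEssInfFam.exists_antitone_tendsto {s : Set (Ω → ℝ)} {g : Ω → ℝ}
    (hg : IsEssInfFam μ s g) (hs : ∀ f ∈ s, Measurable f) (hne : s.Nonempty)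
    (hdir : ∀ f ∈ s, ∀ f' ∈ s, ∃ h ∈ s, h ≤ᵐ[μ] fun ω => min (f ω) (f' ω)) :
    ∃ fs : ℕ → Ω → ℝ, (∀ n, fs n ∈ s) ∧
      ∀ᵐ ω ∂μ, Antitone (fun n => fs n ω) ∧ Tendsto (fun n => fs n ω) atTop (𝓝 (g ω)) := by
  have hneg : IsEssSupFam μ ((fun f => -f) '' s) (-g) := by
    refine ⟨?_, fun h hh => ?_⟩
    · rintro _ ⟨f, hf, rfl⟩
      exact (hg.1 f hf).mono fun _ hω => neg_le_neg hω
    · have := hg.2 (-h) fun f hf => (hh _ ⟨f, hf, rfl⟩).mono fun _ hω => neg_le.1 hω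
      exact this.mono fun _ hω => neg_le.1 hω
  obtain ⟨fs, hfs, hlim⟩ := hneg.exists_monotone_tendsto
    (by rintro _ ⟨f, hf, rfl⟩; exact (hs f hf).neg) (hne.image _) (by
      rintro _ ⟨f, hf, rfl⟩ _ ⟨f', hf', rfl⟩
      obtain ⟨h, hh, hle⟩ := hdir f hf f' hf'
      exact ⟨-h, ⟨h, hh, rfl⟩, hle.mono fun ω hω => by simpa [max_neg_neg] using hω⟩)
  choose f hf_mem hf_eq using hfs
  refine ⟨f, hf_mem, hlim.mono fun ω ⟨hmono, hω⟩ => ⟨fun a b hab => ?_, ?_⟩⟩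
  · simpa [← hf_eq] using hmono hab
  · simpa [← hf_eq] using hω.neg

end EssSup

namespace FExp

/-- `Dom⁺(E)`. -/
def DomPos (𝔈 : FExp μ T ℱ) (ξ : Ω → ℝ) : Prop :=
  ξ ∈ 𝔈.Dom ∧ 0 ≤ᵐ[μ] ξ

section Calculus

variable {𝔈 : FExp μ T ℱ} {τ σ θ ξ η : Ω → ℝ}

lemma DomPos.of_le (hη : 𝔈.DomPos η) (hξ : 0 ≤ᵐ[μ] ξ) (h : ξ ≤ᵐ[μ] η) : 𝔈.DomPos ξ :=
  ⟨𝔈.sandwich_mem hη.1 (hξ.and h), hξ⟩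

lemma DomPos.congr (hη : 𝔈.DomPos η) (h : ξ =ᵐ[μ] η) : 𝔈.DomPos ξ :=
  hη.of_le (hη.2.trans h.symm.le) h.le

lemma DomPos.add (hξ : 𝔈.DomPos ξ) (hη : 𝔈.DomPos η) : 𝔈.DomPos (ξ + η) :=
  ⟨𝔈.add_mem hξ.1 hη.1, by filter_upwards [hξ.2, hη.2] with ω h₁ h₂ using add_nonneg h₁ h₂⟩

lemma DomPos.indicator (hξ : 𝔈.DomPos ξ) {A : Set Ω} (hA : MeasurableSet A) :
    𝔈.DomPos (A.indicator ξ) :=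
  ⟨𝔈.indicator_mem hξ.1 hA, hξ.2.mono fun _ hω => Set.indicator_nonneg (fun _ _ => hω) _⟩

lemma DomPos.const_mul (hξ : 𝔈.DomPos ξ) {l : ℝ} (hl₀ : 0 ≤ l) (hl₁ : l ≤ 1) :
    𝔈.DomPos fun ω => l * ξ ω :=
  hξ.of_le (hξ.2.mono fun _ hω => mul_nonneg hl₀ hω)
    (hξ.2.mono fun _ hω => mul_le_of_le_one_left hω hl₁)

lemma DomPos.cond (hξ : 𝔈.DomPos ξ) (hτ : Stop0 ℱ T τ) : 𝔈.DomPos (𝔈.cond τ ξ) :=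
  ⟨𝔈.cond_mem hτ hξ.1 hξ.2, 𝔈.cond_nonneg hτ hξ.1 hξ.2⟩

lemma domPos_const (𝔈 : FExp μ T ℱ) {c : ℝ} (hc : 0 ≤ c) : 𝔈.DomPos fun _ => c :=
  ⟨𝔈.const_mem c, ae_of_all _ fun _ => hc⟩

lemma cond_mono (hτ : Stop0 ℱ T τ) (hξ : 𝔈.DomPos ξ) (hη : 𝔈.DomPos η) (h : ξ ≤ᵐ[μ] η) :
    𝔈.cond τ ξ ≤ᵐ[μ] 𝔈.cond τ η :=
  𝔈.mono hτ hξ.1 hξ.2 hη.1 hη.2 h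

lemma cond_congr (hτ : Stop0 ℱ T τ) (hξ : 𝔈.DomPos ξ) (hη : 𝔈.DomPos η) (h : ξ =ᵐ[μ] η) :
    𝔈.cond τ ξ =ᵐ[μ] 𝔈.cond τ η :=
  (cond_mono hτ hξ hη h.le).antisymm (cond_mono hτ hη hξ h.symm.le)

lemma cond_cond (hσ : Stop0 ℱ T σ) (hτ : Stop0 ℱ T τ) (hστ : ∀ ω, σ ω ≤ τ ω)
    (hξ : 𝔈.DomPos ξ) : 𝔈.cond σ (𝔈.cond τ ξ) =ᵐ[μ] 𝔈.cond σ ξ :=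
  𝔈.time_consistent hσ hτ hστ hξ.1 hξ.2

lemma cond_indicator (hτ : Stop0 ℱ T τ) (hξ : 𝔈.DomPos ξ) {A : Set Ω}
    (hA : MeasurableSet[hτ.1.measurableSpace] A) :
    𝔈.cond τ (A.indicator ξ) =ᵐ[μ] A.indicator (𝔈.cond τ ξ) :=
  𝔈.zero_one hτ hξ.1 hξ.2 hA

lemma PosHom.cond_zero (h7 : 𝔈.PosHom) (hτ : Stop0 ℱ T τ) :
    𝔈.cond τ (fun _ => 0) =ᵐ[μ] fun _ => 0 := by
  simpa using h7 0 le_rfl hτ 𝔈.zero_mem (ae_of_all _ fun _ => le_rfl)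

lemma PosHom.cond_of_measurable (h7 : 𝔈.PosHom) (hτ : Stop0 ℱ T τ) (hξ : 𝔈.DomPos ξ)
    (hm : Measurable[hτ.1.measurableSpace] ξ) : 𝔈.cond τ ξ =ᵐ[μ] ξ := by
  have h := 𝔈.translation hτ 𝔈.zero_mem (ae_of_all _ fun _ => le_rfl) hξ.1 hξ.2 hm
  rw [show (fun _ : Ω => (0 : ℝ)) + ξ = ξ from zero_add ξ] at h
  filter_upwards [h, h7.cond_zero hτ] with ω hω h0
  simp [hω, h0]

lemma PosHom.cond_mul (h7 : 𝔈.PosHom) (hτ : Stop0 ℱ T τ) (hξ : 𝔈.DomPos ξ) {l : ℝ}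
    (hl : 0 ≤ l) : 𝔈.cond τ (fun ω => l * ξ ω) =ᵐ[μ] fun ω => l * 𝔈.cond τ ξ ω :=
  h7 l hl hτ hξ.1 hξ.2

lemma indicator_cond_congr (hσ : Stop0 ℱ T σ) {A : Set Ω}
    (hA : MeasurableSet[hσ.1.measurableSpace] A) (hξ : 𝔈.DomPos ξ) (hη : 𝔈.DomPos η)
    (h : ∀ᵐ ω ∂μ, ω ∈ A → ξ ω = η ω) :
    A.indicator (𝔈.cond σ ξ) =ᵐ[μ] A.indicator (𝔈.cond σ η) := by
  have hAm : MeasurableSet A := hσ.1.measurableSpace_le _ hA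
  have hind : A.indicator ξ =ᵐ[μ] A.indicator η := by
    filter_upwards [h] with ω hω
    by_cases hωA : ω ∈ A <;> simp [hωA, hω]
  exact (cond_indicator hσ hξ hA).symm.trans
    ((cond_congr hσ (hξ.indicator hAm) (hη.indicator hAm) hind).trans (cond_indicator hσ hη hA))

lemma PosHom.indicator_cond_eq_of_le (h7 : 𝔈.PosHom) (hθ : Stop0 ℱ T θ) (hτ : Stop0 ℱ T τ)
    (hθτ : ∀ ω, θ ω ≤ τ ω) {D : Set Ω} (hD : MeasurableSet[hθ.1.measurableSpace] D)
    (hD_eq : ∀ ω ∈ D, θ ω = τ ω) (hξ : 𝔈.DomPos ξ) :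
    D.indicator (𝔈.cond θ ξ) =ᵐ[μ] D.indicator (𝔈.cond τ ξ) := by
  have hτξ := hξ.cond hτ
  have hDm : MeasurableSet D := hθ.1.measurableSpace_le _ hD
  have hmeas : Measurable[hθ.1.measurableSpace] (D.indicator (𝔈.cond τ ξ)) :=
    measurable_indicator_of_eq_on hθ.1 hτ.1 hD hD_eq (𝔈.cond_adapted hτ hξ.1 hξ.2)
  have htc : D.indicator (𝔈.cond θ ξ) =ᵐ[μ] D.indicator (𝔈.cond θ (𝔈.cond τ ξ)) := by
    filter_upwards [cond_cond hθ hτ hθτ hξ] with ω hω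
    by_cases hωD : ω ∈ D <;> simp [hωD, hω]
  exact htc.trans ((cond_indicator hθ hτξ hD).symm.trans
    (h7.cond_of_measurable hθ (hτξ.indicator hDm) hmeas))

lemma PosHom.indicator_cond_eq (h7 : 𝔈.PosHom) (hτ : Stop0 ℱ T τ) (hσ : Stop0 ℱ T σ)
    (hξ : 𝔈.DomPos ξ) :
    {ω | τ ω = σ ω}.indicator (𝔈.cond τ ξ) =ᵐ[μ] {ω | τ ω = σ ω}.indicator (𝔈.cond σ ξ) := by
  have hψ : Stop0 ℱ T fun ω => max (τ ω) (σ ω) := (hτ.isStopIn_max hσ).stop0 hσ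
  have hDτ : MeasurableSet[hτ.1.measurableSpace] {ω | τ ω = σ ω} := by
    simpa using hτ.1.measurableSet_eq_stopping_time hσ.1
  have hDσ : MeasurableSet[hσ.1.measurableSpace] {ω | τ ω = σ ω} := by
    simpa [eq_comm] using hσ.1.measurableSet_eq_stopping_time hτ.1
  exact (h7.indicator_cond_eq_of_le hτ hψ (fun _ => le_max_left _ _) hDτ
      (fun ω hω => (max_eq_left (le_of_eq (Set.mem_ofPred.1 hω).symm)).symm) hξ).trans
    (h7.indicator_cond_eq_of_le hσ hψ (fun _ => le_max_right _ _) hDσ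
      (fun ω hω => (max_eq_right (le_of_eq (Set.mem_ofPred.1 hω))).symm) hξ).symm

lemma cond_convex_comb_le (h6 : 𝔈.Subadditive) (h7 : 𝔈.PosHom) (hτ : Stop0 ℱ T τ)
    (hξ : 𝔈.DomPos ξ) (hη : 𝔈.DomPos η) {l : ℝ} (hl₀ : 0 ≤ l) (hl₁ : l ≤ 1) :
    𝔈.cond τ (fun ω => l * ξ ω + (1 - l) * η ω) ≤ᵐ[μ]
      fun ω => l * 𝔈.cond τ ξ ω + (1 - l) * 𝔈.cond τ η ω := by
  have hlξ := hξ.const_mul hl₀ hl₁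
  have hlη := hη.const_mul (sub_nonneg.2 hl₁) (sub_le_self 1 hl₀)
  filter_upwards [h6 hτ hlξ.1 hlξ.2 hlη.1 hlη.2, h7.cond_mul hτ hξ hl₀,
    h7.cond_mul hτ hη (sub_nonneg.2 hl₁)] with ω hω h₁ h₂
  rw [← h₁, ← h₂]
  exact hω

end Calculus

section Expectation

variable {𝔈 : FExp μ T ℱ} {τ ξ η ζ : Ω → ℝ}

lemma ae_eq_of_le_of_E0_eq (hT : 0 ≤ T) (hξ : 𝔈.DomPos ξ) (hη : 𝔈.DomPos η)
    (h : ξ ≤ᵐ[μ] η) (hE : 𝔈.E0 ξ = 𝔈.E0 η) : ξ =ᵐ[μ] η :=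
  𝔈.strict_mono (stop0_const le_rfl hT) hξ.1 hξ.2 hη.1 hη.2 h
    ((𝔈.E0_eq hξ.1 hξ.2).trans (hE ▸ (𝔈.E0_eq hη.1 hη.2).symm))

variable [NeZero μ]

lemma E0_le_of_cond_le (hξ : 𝔈.DomPos ξ) (hη : 𝔈.DomPos η)
    (h : 𝔈.cond (fun _ => 0) ξ ≤ᵐ[μ] 𝔈.cond (fun _ => 0) η) : 𝔈.E0 ξ ≤ 𝔈.E0 η := by
  obtain ⟨ω, hω⟩ := ((𝔈.E0_eq hξ.1 hξ.2).symm.le.trans (h.trans (𝔈.E0_eq hη.1 hη.2).le)).exists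
  exact hω

lemma E0_mono (hT : 0 ≤ T) (hξ : 𝔈.DomPos ξ) (hη : 𝔈.DomPos η) (h : ξ ≤ᵐ[μ] η) :
    𝔈.E0 ξ ≤ 𝔈.E0 η :=
  E0_le_of_cond_le hξ hη (cond_mono (stop0_const le_rfl hT) hξ hη h)

lemma E0_cond (hT : 0 ≤ T) (hτ : Stop0 ℱ T τ) (hξ : 𝔈.DomPos ξ) :
    𝔈.E0 (𝔈.cond τ ξ) = 𝔈.E0 ξ := by
  have h := cond_cond (stop0_const le_rfl hT) hτ hτ.2.1 hξ
  exact le_antisymm (E0_le_of_cond_le (hξ.cond hτ) hξ h.le)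
    (E0_le_of_cond_le hξ (hξ.cond hτ) h.symm.le)

lemma E0_add_const (hT : 0 ≤ T) (hξ : 𝔈.DomPos ξ) {c : ℝ} (hc : 0 ≤ c) :
    𝔈.E0 (ξ + fun _ => c) = 𝔈.E0 ξ + c := by
  have h0 := stop0_const (ℱ := ℱ) le_rfl hT
  have h := (𝔈.E0_eq (hξ.add (𝔈.domPos_const hc)).1 (hξ.add (𝔈.domPos_const hc)).2).symm.trans
    ((𝔈.translation h0 hξ.1 hξ.2 (𝔈.const_mem c) (ae_of_all _ fun _ => hc)
      measurable_const).trans (.add (𝔈.E0_eq hξ.1 hξ.2) .rfl))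
  obtain ⟨ω, hω⟩ := h.exists
  exact hω

lemma PosHom.E0_zero (h7 : 𝔈.PosHom) (hT : 0 ≤ T) : 𝔈.E0 (fun _ => 0) = 0 := by
  obtain ⟨ω, hω⟩ := ((𝔈.E0_eq 𝔈.zero_mem (ae_of_all _ fun _ => le_rfl)).symm.trans
    (h7.cond_zero (stop0_const le_rfl hT))).exists
  exact hω

lemma PosHom.E0_mul (h7 : 𝔈.PosHom) (hT : 0 ≤ T) (hξ : 𝔈.DomPos ξ) {l : ℝ} (hl₀ : 0 ≤ l)
    (hl₁ : l ≤ 1) : 𝔈.E0 (fun ω => l * ξ ω) = l * 𝔈.E0 ξ := by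
  have hlξ := hξ.const_mul hl₀ hl₁
  obtain ⟨ω, hω⟩ := ((𝔈.E0_eq hlξ.1 hlξ.2).symm.trans ((h7.cond_mul (stop0_const le_rfl hT) hξ
    hl₀).trans (.fun_comp (𝔈.E0_eq hξ.1 hξ.2) (l * ·)))).exists
  exact hω

lemma Subadditive.E0_add_le (h6 : 𝔈.Subadditive) (hT : 0 ≤ T) (hξ : 𝔈.DomPos ξ)
    (hη : 𝔈.DomPos η) : 𝔈.E0 (ξ + η) ≤ 𝔈.E0 ξ + 𝔈.E0 η := by
  obtain ⟨ω, hω⟩ := ((𝔈.E0_eq (hξ.add hη).1 (hξ.add hη).2).symm.le.trans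
    ((h6 (stop0_const le_rfl hT) hξ.1 hξ.2 hη.1 hη.2).trans
      ((𝔈.E0_eq hξ.1 hξ.2).le.add_le_add (𝔈.E0_eq hη.1 hη.2).le))).exists
  exact hω

lemma E0_le_add_E0_indicator (hT : 0 ≤ T) (h6 : 𝔈.Subadditive) (hξ : 𝔈.DomPos ξ)
    (hζ : 𝔈.DomPos ζ) {A : Set Ω} (hA : MeasurableSet A) {ε : ℝ} (hε : 0 ≤ ε)
    (h : ∀ᵐ ω ∂μ, ω ∉ A → ζ ω ≤ ξ ω + ε) :
    𝔈.E0 ζ ≤ 𝔈.E0 ξ + 𝔈.E0 (A.indicator ζ) + ε := by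
  have hAζ := hζ.indicator hA
  have hcover : ζ ≤ᵐ[μ] (ξ + A.indicator ζ) + fun _ => ε := by
    filter_upwards [h, hξ.2] with ω hω h0
    by_cases hωA : ω ∈ A
    · simp only [Pi.add_apply, Set.indicator_of_mem hωA]
      linarith [show 0 ≤ ξ ω from h0]
    · simp only [Pi.add_apply, Set.indicator_of_notMem hωA]
      linarith [hω hωA]
  calc 𝔈.E0 ζ ≤ 𝔈.E0 ((ξ + A.indicator ζ) + fun _ => ε) :=
        E0_mono hT hζ ((hξ.add hAζ).add (𝔈.domPos_const hε)) hcover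
    _ = 𝔈.E0 (ξ + A.indicator ζ) + ε := E0_add_const hT (hξ.add hAζ) hε
    _ ≤ _ := add_le_add_left (h6.E0_add_le hT hξ hAζ) ε

end Expectation

section Convergence

variable [NeZero μ] {𝔈 : FExp μ T ℱ} {τ ζ : Ω → ℝ} {ξ : ℕ → Ω → ℝ}

theorem tendsto_E0_of_tendsto (hT : 0 ≤ T) (h6 : 𝔈.Subadditive) (h7 : 𝔈.PosHom)
    (hξ : ∀ n, 𝔈.DomPos (ξ n)) (hζ : 𝔈.DomPos ζ) (hξm : ∀ n, AEMeasurable (ξ n) μ)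
    (hζm : AEMeasurable ζ μ) (hle : ∀ n, ξ n ≤ᵐ[μ] ζ)
    (hlim : ∀ᵐ ω ∂μ, Tendsto (fun n => ξ n ω) atTop (𝓝 (ζ ω))) :
    Tendsto (fun n => 𝔈.E0 (ξ n)) atTop (𝓝 (𝔈.E0 ζ)) := by
  refine tendsto_order.2 ⟨fun a ha => ?_, fun b hb => .of_forall fun n =>
    (E0_mono hT (hξ n) hζ (hle n)).trans_lt hb⟩
  set ε := (𝔈.E0 ζ - a) / 2 with hε_def
  have hε : 0 < ε := half_pos (sub_pos.2 ha)
  -- `A n` is where some `ξ k` with `k ≥ n` still lags `ε` behind `ζ`; (H2) makes it negligible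
  set A : ℕ → Set Ω := fun n => ⋃ k ≥ n, {ω | (hξm k).mk _ ω + ε < hζm.mk _ ω}
  have hA_meas : ∀ n, MeasurableSet (A n) := fun n =>
    .biUnion (Set.to_countable _) fun k _ =>
      measurableSet_lt ((hξm k).measurable_mk.add_const ε) hζm.measurable_mk
  have hA_anti : Antitone A := fun n n' hnn' =>
    Set.biUnion_subset_biUnion_left fun k hk => le_trans hnn' hk
  have hgood : ∀ᵐ ω ∂μ, (∀ k, ξ k ω = (hξm k).mk _ ω) ∧ ζ ω = hζm.mk _ ω :=
    (ae_all_iff.2 fun k => (hξm k).ae_eq_mk).and hζm.ae_eq_mk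
  have hA_null : ∀ᵐ ω ∂μ, ω ∉ ⋂ n, A n := by
    filter_upwards [hgood, hlim] with ω ⟨hξω, hζω⟩ hω hmem
    obtain ⟨N, hN⟩ := eventually_atTop.1 (hω.eventually (lt_mem_nhds (sub_lt_self _ hε)))
    obtain ⟨k, hk, hkω⟩ := Set.mem_iUnion₂.1 (Set.mem_iInter.1 hmem N)
    have hkN := hN k hk
    rw [Set.mem_ofPred, ← hξω, ← hζω] at hkω
    linarith
  have hsmall : Tendsto (fun n => 𝔈.E0 ((A n).indicator ζ)) atTop (𝓝 0) := by
    have hzero : ∀ n, (fun _ => 0) + (A n).indicator ζ = (A n).indicator ζ := fun n => zero_add _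
    simpa only [hzero, h7.E0_zero hT] using
      𝔈.h2 𝔈.zero_mem (ae_of_all _ fun _ => le_rfl) hζ.1 hζ.2 hA_meas hA_anti hA_null
  have hbound : ∀ n, 𝔈.E0 ζ ≤ 𝔈.E0 (ξ n) + 𝔈.E0 ((A n).indicator ζ) + ε := fun n =>
    E0_le_add_E0_indicator hT h6 (hξ n) hζ (hA_meas n) hε.le (by
      filter_upwards [hgood] with ω ⟨hξω, hζω⟩ hωA
      have hlag : ¬ (hξm n).mk _ ω + ε < hζm.mk _ ω := fun h => hωA (Set.mem_biUnion (le_refl n) h)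
      rw [hξω n, hζω]
      linarith)
  filter_upwards [hsmall.eventually (gt_mem_nhds hε)] with n hn
  linarith [hbound n, hε_def]

theorem tendsto_cond_of_monotone (hT : 0 ≤ T) (h6 : 𝔈.Subadditive) (h7 : 𝔈.PosHom)
    (hτ : Stop0 ℱ T τ) (hξ : ∀ n, 𝔈.DomPos (ξ n)) (hζ : 𝔈.DomPos ζ)
    (hξm : ∀ n, AEMeasurable (ξ n) μ) (hζm : AEMeasurable ζ μ)
    (hmono : ∀ᵐ ω ∂μ, Monotone fun n => ξ n ω)
    (hlim : ∀ᵐ ω ∂μ, Tendsto (fun n => ξ n ω) atTop (𝓝 (ζ ω))) :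
    ∀ᵐ ω ∂μ, Tendsto (fun n => 𝔈.cond τ (ξ n) ω) atTop (𝓝 (𝔈.cond τ ζ ω)) := by
  have hle : ∀ n, ξ n ≤ᵐ[μ] ζ := fun n => by
    filter_upwards [hmono, hlim] with ω hm hl using hm.ge_of_tendsto hl n
  have hcξ : ∀ n, 𝔈.DomPos (𝔈.cond τ (ξ n)) := fun n => (hξ n).cond hτ
  have hcm : ∀ n, Measurable (𝔈.cond τ (ξ n)) := fun n =>
    (𝔈.cond_adapted hτ (hξ n).1 (hξ n).2).mono hτ.1.measurableSpace_le le_rfl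
  set H : Ω → ℝ := fun ω => ⨆ n, 𝔈.cond τ (ξ n) ω
  have hH : ∀ᵐ ω ∂μ, Monotone (fun n => 𝔈.cond τ (ξ n) ω) ∧
      Tendsto (fun n => 𝔈.cond τ (ξ n) ω) atTop (𝓝 (H ω)) ∧ H ω ≤ 𝔈.cond τ ζ ω := by
    have hstep : ∀ n, 𝔈.cond τ (ξ n) ≤ᵐ[μ] 𝔈.cond τ (ξ (n + 1)) := fun n =>
      cond_mono hτ (hξ n) (hξ (n + 1)) (hmono.mono fun _ h => h n.le_succ)
    filter_upwards [ae_all_iff.2 hstep, ae_all_iff.2 fun n => cond_mono hτ (hξ n) hζ (hle n)]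
      with ω hstepω hζω
    have hm := monotone_nat_of_le_succ hstepω
    exact ⟨hm, tendsto_atTop_ciSup hm ⟨_, Set.forall_mem_range.2 hζω⟩, ciSup_le hζω⟩
  have hHpos : 𝔈.DomPos H := by
    refine ⟨𝔈.h5 (fun n => (hcξ n).1) (fun n => (hcξ n).2) (hH.mono fun _ h => h.2.1)
      ⟨𝔈.E0 (𝔈.cond τ ζ), .of_forall fun n =>
        E0_mono hT (hcξ n) (hζ.cond hτ) (cond_mono hτ (hξ n) hζ (hle n))⟩, ?_⟩
    filter_upwards [hH, (hcξ 0).2] with ω h h0 using h0.trans (h.1.ge_of_tendsto h.2.1 0)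
  have hE : 𝔈.E0 H = 𝔈.E0 (𝔈.cond τ ζ) := by
    rw [E0_cond hT hτ hζ]
    refine tendsto_nhds_unique (tendsto_E0_of_tendsto hT h6 h7 hcξ hHpos
      (fun n => (hcm n).aemeasurable) (Measurable.iSup hcm).aemeasurable
      (fun n => hH.mono fun _ h => h.1.ge_of_tendsto h.2.1 n) (hH.mono fun _ h => h.2.1)) ?_
    simp_rw [E0_cond hT hτ (hξ _)]
    exact tendsto_E0_of_tendsto hT h6 h7 hξ hζ hξm hζm hle hlim
  filter_upwards [hH, ae_eq_of_le_of_E0_eq hT hHpos (hζ.cond hτ) (hH.mono fun _ h => h.2.2) hE]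
    with ω h hHω
  exact hHω ▸ h.2.1

end Convergence

end FExp

section Value

open FExp

variable {𝔈 : FExp μ T ℱ} {X v : (Ω → ℝ) → Ω → ℝ} {σ τ ρ : Ω → ℝ}

lemma Admissible.domPos (hX : Admissible 𝔈 X) (hρ : Stop0 ℱ T ρ) : 𝔈.DomPos (X ρ) :=
  ⟨(hX.1 ρ hρ).1, (hX.1 ρ hρ).2.1⟩

lemma Admissible.measurable (hX : Admissible 𝔈 X) (hρ : Stop0 ℱ T ρ) :
    Measurable[hρ.1.measurableSpace] (X ρ) :=
  (hX.1 ρ hρ).2.2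

lemma Admissible.measurable_cond (hX : Admissible 𝔈 X) (hσ : Stop0 ℱ T σ)
    (hρ : Stop0 ℱ T ρ) : Measurable[hσ.1.measurableSpace] (𝔈.cond σ (X ρ)) :=
  𝔈.cond_adapted hσ (hX.domPos hρ).1 (hX.domPos hρ).2

lemma Admissible.exists_cond_eq_max (hX : Admissible 𝔈 X) (hσ : Stop0 ℱ T σ) {ρ₁ ρ₂ : Ω → ℝ}
    (h₁ : IsStopIn ℱ T σ ρ₁) (h₂ : IsStopIn ℱ T σ ρ₂) :
    ∃ ρ₃, IsStopIn ℱ T σ ρ₃ ∧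
      𝔈.cond σ (X ρ₃) =ᵐ[μ] fun ω => max (𝔈.cond σ (X ρ₁) ω) (𝔈.cond σ (X ρ₂) ω) := by
  classical
  have h₁0 := h₁.stop0 hσ
  have h₂0 := h₂.stop0 hσ
  set C := {ω | 𝔈.cond σ (X ρ₂) ω ≤ 𝔈.cond σ (X ρ₁) ω}
  have hC : MeasurableSet[hσ.1.measurableSpace] C :=
    measurableSet_le (hX.measurable_cond hσ h₂0) (hX.measurable_cond hσ h₁0)
  have h₃ : IsStopIn ℱ T σ (C.piecewise ρ₁ ρ₂) :=
    isStopIn_piecewise hσ.1 hC h₁0 h₂0 (fun ω _ => h₁.2.1 ω) (fun ω _ => h₂.2.1 ω)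
  have h₃0 := h₃.stop0 hσ
  have e₁ := indicator_cond_congr hσ hC (hX.domPos h₃0) (hX.domPos h₁0) (by
    filter_upwards [hX.2 _ _ h₃0 h₁0] with ω h hω using h (Set.piecewise_eq_of_mem _ _ _ hω))
  have e₂ := indicator_cond_congr hσ hC.compl (hX.domPos h₃0) (hX.domPos h₂0) (by
    filter_upwards [hX.2 _ _ h₃0 h₂0] with ω h hω using h (Set.piecewise_eq_of_notMem _ _ _ hω))
  refine ⟨_, h₃, ?_⟩
  filter_upwards [e₁, e₂] with ω e₁ e₂
  by_cases hω : ω ∈ C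
  · simp only [Set.indicator_of_mem hω] at e₁
    rw [e₁, max_eq_left hω]
  · simp only [Set.indicator_of_mem (Set.mem_compl hω)] at e₂
    rw [e₂, max_eq_right (le_of_not_ge hω)]

lemma IsValueFam.cond_le (hv : IsValueFam 𝔈 X v) (hσ : Stop0 ℱ T σ) (hρ : IsStopIn ℱ T σ ρ) :
    𝔈.cond σ (X ρ) ≤ᵐ[μ] v σ :=
  (hv σ hσ).1 _ ⟨ρ, hρ, rfl⟩

lemma IsValueFam.reward_le (hv : IsValueFam 𝔈 X v) (h7 : 𝔈.PosHom) (hX : Admissible 𝔈 X)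
    (hσ : Stop0 ℱ T σ) : X σ ≤ᵐ[μ] v σ :=
  (h7.cond_of_measurable hσ (hX.domPos hσ) (hX.measurable hσ)).symm.le.trans
    (hv.cond_le hσ hσ.isStopIn_self)

lemma IsValueFam.nonneg (hv : IsValueFam 𝔈 X v) (h7 : 𝔈.PosHom) (hX : Admissible 𝔈 X)
    (hσ : Stop0 ℱ T σ) : 0 ≤ᵐ[μ] v σ :=
  (hX.domPos hσ).2.trans (hv.reward_le h7 hX hσ)

lemma IsValueFam.exists_monotone_tendsto [IsFiniteMeasure μ] (hv : IsValueFam 𝔈 X v)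
    (hX : Admissible 𝔈 X) (hσ : Stop0 ℱ T σ) :
    ∃ ρs : ℕ → Ω → ℝ, (∀ n, IsStopIn ℱ T σ (ρs n)) ∧
      ∀ᵐ ω ∂μ, Monotone (fun n => 𝔈.cond σ (X (ρs n)) ω) ∧
        Tendsto (fun n => 𝔈.cond σ (X (ρs n)) ω) atTop (𝓝 (v σ ω)) := by
  obtain ⟨fs, hfs, hlim⟩ := (hv σ hσ).exists_monotone_tendsto
    (by
      rintro _ ⟨ρ, hρ, rfl⟩
      exact (hX.measurable_cond hσ (hρ.stop0 hσ)).mono hσ.1.measurableSpace_le le_rfl)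
    ⟨_, σ, hσ.isStopIn_self, rfl⟩
    (by
      rintro _ ⟨ρ₁, h₁, rfl⟩ _ ⟨ρ₂, h₂, rfl⟩
      obtain ⟨ρ₃, h₃, e⟩ := hX.exists_cond_eq_max hσ h₁ h₂
      exact ⟨_, ⟨ρ₃, h₃, rfl⟩, e.symm.le⟩)
  choose ρs hρs hfs_eq using hfs
  exact ⟨ρs, hρs, by simpa only [hfs_eq] using hlim⟩

lemma IsValueFam.exists_measurable_ae_eq [IsFiniteMeasure μ] (hv : IsValueFam 𝔈 X v)
    (hX : Admissible 𝔈 X) (hσ : Stop0 ℱ T σ) :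
    ∃ g, Measurable[hσ.1.measurableSpace] g ∧ g =ᵐ[μ] v σ := by
  obtain ⟨ρs, hρs, hlim⟩ := hv.exists_monotone_tendsto hX hσ
  refine ⟨fun ω => ⨆ n, 𝔈.cond σ (X (ρs n)) ω,
    Measurable.iSup fun n => hX.measurable_cond hσ ((hρs n).stop0 hσ), ?_⟩
  filter_upwards [hlim] with ω ⟨hm, hl⟩ using (isLUB_of_tendsto_atTop hm hl).ciSup_eq

lemma IsValueFam.aemeasurable [IsFiniteMeasure μ] (hv : IsValueFam 𝔈 X v)
    (hX : Admissible 𝔈 X) (hσ : Stop0 ℱ T σ) : AEMeasurable (v σ) μ :=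
  let ⟨_, hg, hgv⟩ := hv.exists_measurable_ae_eq hX hσ
  ⟨_, hg.mono hσ.1.measurableSpace_le le_rfl, hgv.symm⟩

lemma IsValueFam.domPos [IsFiniteMeasure μ] [NeZero μ] (hT : 0 ≤ T) (h7 : 𝔈.PosHom)
    (hX : Admissible 𝔈 X) (hbdd : BddRewardE0 𝔈 X) (hv : IsValueFam 𝔈 X v)
    (hσ : Stop0 ℱ T σ) : 𝔈.DomPos (v σ) := by
  obtain ⟨ρs, hρs, hlim⟩ := hv.exists_monotone_tendsto hX hσ
  obtain ⟨C, hC⟩ := hbdd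
  have hρs0 : ∀ n, Stop0 ℱ T (ρs n) := fun n => (hρs n).stop0 hσ
  refine ⟨𝔈.h5 (fun n => ((hX.domPos (hρs0 n)).cond hσ).1)
    (fun n => ((hX.domPos (hρs0 n)).cond hσ).2) (hlim.mono fun _ h => h.2)
    ⟨C, .of_forall fun n => ?_⟩, hv.nonneg h7 hX hσ⟩
  rw [E0_cond hT hσ (hX.domPos (hρs0 n))]
  exact hC _ (hρs0 n)

lemma IsValueFam.E0_le [IsFiniteMeasure μ] [NeZero μ] (hT : 0 ≤ T) (h6 : 𝔈.Subadditive)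
    (h7 : 𝔈.PosHom) (hX : Admissible 𝔈 X) (hbdd : BddRewardE0 𝔈 X) (hv : IsValueFam 𝔈 X v)
    (hσ : Stop0 ℱ T σ) {β : ℝ} (hβ : ∀ ρ, IsStopIn ℱ T σ ρ → 𝔈.E0 (X ρ) ≤ β) :
    𝔈.E0 (v σ) ≤ β := by
  obtain ⟨ρs, hρs, hlim⟩ := hv.exists_monotone_tendsto hX hσ
  have hρs0 : ∀ n, Stop0 ℱ T (ρs n) := fun n => (hρs n).stop0 hσ
  refine le_of_tendsto (tendsto_E0_of_tendsto hT h6 h7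
    (fun n => (hX.domPos (hρs0 n)).cond hσ) (hv.domPos hT h7 hX hbdd hσ)
    (fun n => ((hX.measurable_cond hσ (hρs0 n)).mono hσ.1.measurableSpace_le le_rfl).aemeasurable)
    (hv.aemeasurable hX hσ) (fun n => hv.cond_le hσ (hρs n)) (hlim.mono fun _ h => h.2))
    (.of_forall fun n => ?_)
  rw [E0_cond hT hσ (hX.domPos (hρs0 n))]
  exact hβ _ (hρs n)

lemma IsValueFam.cond_le_of_le [IsFiniteMeasure μ] [NeZero μ] (hT : 0 ≤ T)
    (h6 : 𝔈.Subadditive) (h7 : 𝔈.PosHom) (hX : Admissible 𝔈 X) (hbdd : BddRewardE0 𝔈 X)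
    (hv : IsValueFam 𝔈 X v) (hτ : Stop0 ℱ T τ) (hρ : Stop0 ℱ T ρ) (hτρ : ∀ ω, τ ω ≤ ρ ω) :
    𝔈.cond τ (v ρ) ≤ᵐ[μ] v τ := by
  obtain ⟨ρs, hρs, hlim⟩ := hv.exists_monotone_tendsto hX hρ
  have hρs0 : ∀ n, Stop0 ℱ T (ρs n) := fun n => (hρs n).stop0 hρ
  have hconv := tendsto_cond_of_monotone hT h6 h7 hτ (fun n => (hX.domPos (hρs0 n)).cond hρ)
    (hv.domPos hT h7 hX hbdd hρ)
    (fun n => ((hX.measurable_cond hρ (hρs0 n)).mono hρ.1.measurableSpace_le le_rfl).aemeasurable)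
    (hv.aemeasurable hX hρ) (hlim.mono fun _ h => h.1) (hlim.mono fun _ h => h.2)
  filter_upwards [hconv, ae_all_iff.2 fun n => cond_cond hτ hρ hτρ (hX.domPos (hρs0 n)),
    ae_all_iff.2 fun n => hv.cond_le hτ ((hρs n).mono hτρ)] with ω hω htc hle
  exact le_of_tendsto' hω fun n => (htc n).trans_le (hle n)

lemma IsValueFam.le_of_eq (hv : IsValueFam 𝔈 X v) (h7 : 𝔈.PosHom) (hX : Admissible 𝔈 X)
    (hτ : Stop0 ℱ T τ) (hσ : Stop0 ℱ T σ) : ∀ᵐ ω ∂μ, τ ω = σ ω → v τ ω ≤ v σ ω := by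
  classical
  set D := {ω | τ ω = σ ω}
  have hDσ : MeasurableSet[hσ.1.measurableSpace] D := by
    simpa [D, eq_comm] using hσ.1.measurableSet_eq_stopping_time hτ.1
  -- a stopping time after `τ` is moved to `T` off `D`, which makes it a stopping time after `σ`
  have key : ∀ ρ, IsStopIn ℱ T τ ρ → 𝔈.cond τ (X ρ) ≤ᵐ[μ] D.piecewise (v σ) (v τ) := by
    intro ρ hρ
    have hρ0 := hρ.stop0 hτ
    have hρ' : IsStopIn ℱ T σ (D.piecewise ρ fun _ => T) :=
      isStopIn_piecewise hσ.1 hDσ hρ0 (hσ.isStopIn_const.stop0 hσ)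
        (fun ω hω => (Set.mem_ofPred.1 hω) ▸ hρ.2.1 ω) (fun ω _ => hσ.2.2 ω)
    have hρ'0 := hρ'.stop0 hσ
    have e₁ : D.indicator (𝔈.cond τ (X ρ)) =ᵐ[μ] D.indicator (𝔈.cond σ (X ρ)) :=
      h7.indicator_cond_eq hτ hσ (hX.domPos hρ0)
    have e₂ := indicator_cond_congr hσ hDσ (hX.domPos hρ0) (hX.domPos hρ'0) (by
      filter_upwards [hX.2 _ _ hρ0 hρ'0] with ω h hω
      exact h (Set.piecewise_eq_of_mem _ _ _ hω).symm)
    filter_upwards [e₁, e₂, hv.cond_le hσ hρ', hv.cond_le hτ hρ] with ω e₁ e₂ h₁ h₂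
    by_cases hω : ω ∈ D
    · simp only [Set.indicator_of_mem hω, Set.piecewise_eq_of_mem _ _ _ hω] at e₁ e₂ ⊢
      exact (e₁.trans e₂).trans_le h₁
    · simpa only [Set.piecewise_eq_of_notMem _ _ _ hω] using h₂
  filter_upwards [(hv τ hτ).2 _ (by rintro _ ⟨ρ, hρ, rfl⟩; exact key ρ hρ)] with ω h hω
  rwa [Set.piecewise_eq_of_mem D (v σ) (v τ) hω] at h

lemma IsValueFam.eq_of_eq (hv : IsValueFam 𝔈 X v) (h7 : 𝔈.PosHom) (hX : Admissible 𝔈 X)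
    (hτ : Stop0 ℱ T τ) (hσ : Stop0 ℱ T σ) : ∀ᵐ ω ∂μ, τ ω = σ ω → v τ ω = v σ ω := by
  filter_upwards [hv.le_of_eq h7 hX hτ hσ, hv.le_of_eq h7 hX hσ hτ] with ω h₁ h₂ h
  exact le_antisymm (h₁ h) (h₂ h.symm)

lemma IsValueFam.const_T (hv : IsValueFam 𝔈 X v) (h7 : 𝔈.PosHom) (hX : Admissible 𝔈 X)
    (hT : 0 ≤ T) : v (fun _ => T) =ᵐ[μ] X fun _ => T := by
  have hTs : Stop0 ℱ T fun _ => T := stop0_const hT le_rfl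
  refine ((hv _ hTs).2 _ ?_).antisymm (hv.reward_le h7 hX hTs)
  rintro _ ⟨ρ, hρ, rfl⟩
  obtain rfl : ρ = fun _ => T := funext fun ω => le_antisymm (hρ.2.2 ω) (hρ.2.1 ω)
  exact (h7.cond_of_measurable hTs (hX.domPos hTs) (hX.measurable hTs)).le

end Value

section LambdaStops

open FExp

variable {𝔈 : FExp μ T ℱ} {X v : (Ω → ℝ) → Ω → ℝ} {l : ℝ} {κ τ σ ρ : Ω → ℝ}

def lambdaStops (μ : Measure Ω) (ℱ : Filtration ℝ m) (T : ℝ) (X v : (Ω → ℝ) → Ω → ℝ) (l : ℝ)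
    (κ : Ω → ℝ) : Set (Ω → ℝ) :=
  {τ | IsStopIn ℱ T κ τ ∧ (fun ω => l * v τ ω) ≤ᵐ[μ] X τ}

lemma IsValueFam.const_mem_lambdaStops (hv : IsValueFam 𝔈 X v) (h7 : 𝔈.PosHom)
    (hX : Admissible 𝔈 X) (hT : 0 ≤ T) (hl : l ≤ 1) (hκ : Stop0 ℱ T κ) :
    (fun _ => T) ∈ lambdaStops μ ℱ T X v l κ := by
  refine ⟨hκ.isStopIn_const, ?_⟩
  filter_upwards [hv.const_T h7 hX hT, (hX.domPos (stop0_const hT le_rfl)).2] with ω hω h0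
  rw [hω]
  exact mul_le_of_le_one_left h0 hl

lemma IsValueFam.min_mem_lambdaStops (hv : IsValueFam 𝔈 X v) (h7 : 𝔈.PosHom)
    (hX : Admissible 𝔈 X) (hκ : Stop0 ℱ T κ) (hτ : τ ∈ lambdaStops μ ℱ T X v l κ)
    (hσ : σ ∈ lambdaStops μ ℱ T X v l κ) :
    (fun ω => min (τ ω) (σ ω)) ∈ lambdaStops μ ℱ T X v l κ := by
  have hmin := hτ.1.min hσ.1
  have hτ0 := hτ.1.stop0 hκ
  have hσ0 := hσ.1.stop0 hκ
  have hmin0 := hmin.stop0 hκ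
  refine ⟨hmin, ?_⟩
  filter_upwards [hv.eq_of_eq h7 hX hmin0 hτ0, hv.eq_of_eq h7 hX hmin0 hσ0, hX.2 _ _ hmin0 hτ0,
    hX.2 _ _ hmin0 hσ0, hτ.2, hσ.2] with ω hvτ hvσ hXτ hXσ hτω hσω
  rcases le_total (τ ω) (σ ω) with h | h
  · have e : min (τ ω) (σ ω) = τ ω := min_eq_left h
    rw [hvτ e, hXτ e]
    exact hτω
  · have e : min (τ ω) (σ ω) = σ ω := min_eq_right h
    rw [hvσ e, hXσ e]
    exact hσω

open Classical in
/-- `g` stands in for `v ρ`, which need not be measurable, in the definition of the stopping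
region. -/
lemma IsValueFam.piecewise_mem_lambdaStops (hv : IsValueFam 𝔈 X v) (h7 : 𝔈.PosHom)
    (hX : Admissible 𝔈 X) (hT : 0 ≤ T) (hl : l ≤ 1) (hκ : Stop0 ℱ T κ)
    (hρ : IsStopIn ℱ T κ ρ) {g : Ω → ℝ} (hg : Measurable[(hρ.stop0 hκ).1.measurableSpace] g)
    (hgv : g =ᵐ[μ] v ρ) :
    {ω | l * g ω ≤ X ρ ω}.piecewise ρ (fun _ => T) ∈ lambdaStops μ ℱ T X v l κ := by
  set C := {ω | l * g ω ≤ X ρ ω}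
  have hρ0 := hρ.stop0 hκ
  have hT0 : Stop0 ℱ T fun _ => T := stop0_const hT le_rfl
  have hρ' : IsStopIn ℱ T ρ (C.piecewise ρ fun _ => T) :=
    isStopIn_piecewise hρ0.1 (measurableSet_le (hg.const_mul l) (hX.measurable hρ0)) hρ0 hT0
      (fun _ _ => le_rfl) (fun ω _ => hρ0.2.2 ω)
  have hρ'0 := hρ'.stop0 hρ0
  refine ⟨hρ'.mono hρ.2.1, ?_⟩
  filter_upwards [hgv, hv.eq_of_eq h7 hX hρ'0 hρ0, hv.eq_of_eq h7 hX hρ'0 hT0,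
    hX.2 _ _ hρ'0 hρ0, hX.2 _ _ hρ'0 hT0, hv.const_T h7 hX hT, (hX.domPos hT0).2]
    with ω hgω hv₁ hv₂ hX₁ hX₂ hvT h0
  by_cases hω : ω ∈ C
  · have e : C.piecewise ρ (fun _ => T) ω = ρ ω := Set.piecewise_eq_of_mem _ _ _ hω
    rw [hv₁ e, hX₁ e, ← hgω]
    exact hω
  · have e : C.piecewise ρ (fun _ => T) ω = T := Set.piecewise_eq_of_notMem _ _ _ hω
    rw [hv₂ e, hX₂ e, hvT]
    exact mul_le_of_le_one_left h0 hl

/-- The witness is `max ρ' tl` with `ρ'` from `piecewise_mem_lambdaStops`; it equals `ρ` where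
`ρ` is `λ`-optimal, because `tl ≤ ρ'`. -/
lemma IsValueFam.exists_reward_le [IsFiniteMeasure μ] [NeZero μ] (hv : IsValueFam 𝔈 X v)
    (h7 : 𝔈.PosHom) (hX : Admissible 𝔈 X) (hbdd : BddRewardE0 𝔈 X) (hT : 0 ≤ T)
    (hl : l ≤ 1) (hκ : Stop0 ℱ T κ) {tl : Ω → ℝ} (htl : Stop0 ℱ T tl)
    (htl_le : ∀ τ ∈ lambdaStops μ ℱ T X v l κ, tl ≤ᵐ[μ] τ) (hρ : IsStopIn ℱ T κ ρ) :
    ∃ π, Stop0 ℱ T π ∧ (∀ ω, tl ω ≤ π ω) ∧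
      X ρ ≤ᵐ[μ] fun ω => l * v ρ ω + (1 - l) * 𝔈.cond ρ (v π) ω := by
  classical
  have hρ0 := hρ.stop0 hκ
  obtain ⟨g, hg, hgv⟩ := hv.exists_measurable_ae_eq hX hρ0
  set C := {ω | l * g ω ≤ X ρ ω}
  have hC : MeasurableSet[hρ0.1.measurableSpace] C :=
    measurableSet_le (hg.const_mul l) (hX.measurable hρ0)
  have hgood := hv.piecewise_mem_lambdaStops h7 hX hT hl hκ hρ hg hgv
  set ρ' := C.piecewise ρ fun _ => T with hρ'_def
  have hπ : IsStopIn ℱ T tl fun ω => max (ρ' ω) (tl ω) := (hgood.1.stop0 hκ).isStopIn_max htl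
  have hπ0 := hπ.stop0 htl
  have hvπ := hv.domPos hT h7 hX hbdd hπ0
  refine ⟨_, hπ0, hπ.2.1, ?_⟩
  have hπρ : ∀ᵐ ω ∂μ, ω ∈ C → max (ρ' ω) (tl ω) = ρ ω := by
    filter_upwards [htl_le _ hgood] with ω h hω
    rw [max_eq_left h, hρ'_def, Set.piecewise_eq_of_mem _ _ _ hω]
  have hgpos : 𝔈.DomPos g := (hv.domPos hT h7 hX hbdd hρ0).congr hgv
  have hloc : C.indicator (𝔈.cond ρ (v fun ω => max (ρ' ω) (tl ω))) =ᵐ[μ]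
      C.indicator (𝔈.cond ρ g) := by
    refine indicator_cond_congr hρ0 hC hvπ hgpos ?_
    filter_upwards [hπρ, hv.eq_of_eq h7 hX hπ0 hρ0, hgv] with ω h₁ h₂ h₃ hω
    rw [h₂ (h₁ hω), h₃]
  filter_upwards [hloc, h7.cond_of_measurable hρ0 hgpos hg, hgv, hv.reward_le h7 hX hρ0,
    (hvπ.cond hρ0).2] with ω e₁ e₂ e₃ hXv hc
  by_cases hω : ω ∈ C
  · simp only [Set.indicator_of_mem hω] at e₁
    rw [e₁, e₂, e₃]
    linarith
  · have hlt : X ρ ω < l * v ρ ω := e₃ ▸ lt_of_not_ge hω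
    have : 0 ≤ (1 - l) * 𝔈.cond ρ (v fun ω => max (ρ' ω) (tl ω)) ω :=
      mul_nonneg (sub_nonneg.2 hl) hc
    linarith

lemma IsValueFam.cond_reward_le [IsFiniteMeasure μ] [NeZero μ] (hv : IsValueFam 𝔈 X v)
    (hT : 0 ≤ T) (h6 : 𝔈.Subadditive) (h7 : 𝔈.PosHom) (hX : Admissible 𝔈 X)
    (hbdd : BddRewardE0 𝔈 X) (hl₀ : 0 ≤ l) (hl₁ : l ≤ 1) {S tl : Ω → ℝ} (hS : Stop0 ℱ T S)
    (htl : Stop0 ℱ T tl) (hStl : ∀ ω, S ω ≤ tl ω)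
    (htl_le : ∀ τ ∈ lambdaStops μ ℱ T X v l S, tl ≤ᵐ[μ] τ) (hρ : IsStopIn ℱ T S ρ) :
    𝔈.cond S (X ρ) ≤ᵐ[μ] fun ω => l * v S ω + (1 - l) * 𝔈.cond S (v tl) ω := by
  obtain ⟨π, hπ, htlπ, hXρ⟩ := hv.exists_reward_le h7 hX hbdd hT hl₁ hS htl htl_le hρ
  have hρ0 := hρ.stop0 hS
  have hvρ := hv.domPos hT h7 hX hbdd hρ0
  have hvπ := hv.domPos hT h7 hX hbdd hπ
  have hcomb : 𝔈.DomPos fun ω => l * v ρ ω + (1 - l) * 𝔈.cond ρ (v π) ω :=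
    (hvρ.const_mul hl₀ hl₁).add ((hvπ.cond hρ0).const_mul (sub_nonneg.2 hl₁) (sub_le_self 1 hl₀))
  filter_upwards [cond_mono hS (hX.domPos hρ0) hcomb hXρ,
    cond_convex_comb_le h6 h7 hS hvρ (hvπ.cond hρ0) hl₀ hl₁,
    hv.cond_le_of_le hT h6 h7 hX hbdd hS hρ0 hρ.2.1, cond_cond hS hρ0 hρ.2.1 hvπ,
    cond_cond hS htl hStl hvπ,
    cond_mono hS (hvπ.cond htl) (hv.domPos hT h7 hX hbdd htl)
      (hv.cond_le_of_le hT h6 h7 hX hbdd htl hπ htlπ)] with ω h₁ h₂ h₃ h₄ h₅ h₆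
  refine (h₁.trans h₂).trans ?_
  rw [h₄, ← h₅]
  gcongr

lemma IsValueFam.le_cond_of_le_lambdaStops [IsFiniteMeasure μ] [NeZero μ]
    (hv : IsValueFam 𝔈 X v) (hT : 0 ≤ T) (h6 : 𝔈.Subadditive) (h7 : 𝔈.PosHom)
    (hX : Admissible 𝔈 X) (hbdd : BddRewardE0 𝔈 X) (hl₀ : 0 ≤ l) (hl₁ : l < 1)
    {S tl : Ω → ℝ} (hS : Stop0 ℱ T S) (htl : Stop0 ℱ T tl) (hStl : ∀ ω, S ω ≤ tl ω)
    (htl_le : ∀ τ ∈ lambdaStops μ ℱ T X v l S, tl ≤ᵐ[μ] τ) :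
    v S ≤ᵐ[μ] 𝔈.cond S (v tl) := by
  filter_upwards [(hv S hS).2 _ (by
    rintro _ ⟨ρ, hρ, rfl⟩
    exact hv.cond_reward_le hT h6 h7 hX hbdd hl₀ hl₁.le hS htl hStl htl_le hρ)] with ω h
  exact le_of_mul_le_mul_left (by linarith [show v S ω ≤ _ from h]) (sub_pos.2 hl₁)

lemma IsValueFam.mul_E0_le_of_tendsto [IsFiniteMeasure μ] [NeZero μ] (hv : IsValueFam 𝔈 X v)
    (hT : 0 ≤ T) (h6 : 𝔈.Subadditive) (h7 : 𝔈.PosHom) (hX : Admissible 𝔈 X)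
    (hXr : RCE 𝔈 X) (hbdd : BddRewardE0 𝔈 X) (hl₀ : 0 < l) (hl₁ : l ≤ 1) (hτ : Stop0 ℱ T τ)
    {σs : ℕ → Ω → ℝ} (hσs : ∀ n, Stop0 ℱ T (σs n))
    (hgood : ∀ n, (fun ω => l * v (σs n) ω) ≤ᵐ[μ] X (σs n))
    (hlim : ∀ᵐ ω ∂μ, Antitone (fun n => σs n ω) ∧ Tendsto (fun n => σs n ω) atTop (𝓝 (τ ω))) :
    l * 𝔈.E0 (v τ) ≤ 𝔈.E0 (X τ) := by
  rw [← le_div_iff₀' hl₀]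
  refine hv.E0_le hT h6 h7 hX hbdd hτ fun ρ hρ => ?_
  have hρ0 := hρ.stop0 hτ
  have hρσ : ∀ n, IsStopIn ℱ T (σs n) fun ω => max (ρ ω) (σs n ω) := fun n =>
    hρ0.isStopIn_max (hσs n)
  have hρσ0 : ∀ n, Stop0 ℱ T fun ω => max (ρ ω) (σs n ω) := fun n => (hρσ n).stop0 (hσs n)
  have hlimρ := hXr ρ hρ0 _ hρσ0 (by
    filter_upwards [hlim] with ω ⟨hanti, hω⟩
    refine ⟨fun a b hab => max_le_max le_rfl (hanti hab), ?_⟩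
    simpa [max_eq_left (hρ.2.1 ω)] using (tendsto_const_nhds (x := ρ ω)).max hω)
  rw [le_div_iff₀' hl₀]
  refine le_of_tendsto_of_tendsto' (hlimρ.const_mul l) (hXr τ hτ σs hσs hlim) fun n => ?_
  have hvσ := hv.domPos hT h7 hX hbdd (hσs n)
  calc l * 𝔈.E0 (X fun ω => max (ρ ω) (σs n ω))
      = l * 𝔈.E0 (𝔈.cond (σs n) (X fun ω => max (ρ ω) (σs n ω))) := by
        rw [E0_cond hT (hσs n) (hX.domPos (hρσ0 n))]
    _ ≤ l * 𝔈.E0 (v (σs n)) := by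
        gcongr
        exact E0_mono hT ((hX.domPos (hρσ0 n)).cond (hσs n)) hvσ (hv.cond_le (hσs n) (hρσ n))
    _ = 𝔈.E0 fun ω => l * v (σs n) ω := (h7.E0_mul hT hvσ hl₀.le hl₁).symm
    _ ≤ 𝔈.E0 (X (σs n)) :=
        E0_mono hT (hvσ.const_mul hl₀.le hl₁) (hX.domPos (hσs n)) (hgood n)

end LambdaStops

/-- `τ^λ(S)` is `(1-λ)`-optimal: `λ E[v(S)] ≤ E[X(τ^λ(S))]`. -/
theorem essInf_lambda_almost_optimal [IsProbabilityMeasure μ] (hT : 0 < T)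
    (hcf : CompleteFiltration μ ℱ) (hrcf : RightContinuousFiltration ℱ)
    (𝔈 : FExp μ T ℱ) (h6 : 𝔈.Subadditive) (h7 : 𝔈.PosHom)
    (X v : (Ω → ℝ) → Ω → ℝ) (hX : Admissible 𝔈 X) (hXce : CE 𝔈 X)
    (hbdd : BddRewardE0 𝔈 X) (hv : IsValueFam 𝔈 X v)
    (S : Ω → ℝ) (hS : Stop0 ℱ T S) (l : ℝ) (hl : l ∈ Set.Ioo (0 : ℝ) 1)
    (tl : Ω → ℝ) (htl_bd : ∀ ω, S ω ≤ tl ω ∧ tl ω ≤ T)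
    (htl : IsEssInfFam μ
      {τ | IsStopIn ℱ T S τ ∧ (fun ω => l * v τ ω) ≤ᵐ[μ] X τ} tl) :
    l * 𝔈.E0 (v S) ≤ 𝔈.E0 (X tl) := by
  obtain ⟨hl₀, hl₁⟩ := hl
  change IsEssInfFam μ (lambdaStops μ ℱ T X v l S) tl at htl
  obtain ⟨σs, hσs, hlim⟩ := htl.exists_antitone_tendsto (fun τ hτ => (hτ.1.stop0 hS).measurable)
    ⟨_, hv.const_mem_lambdaStops h7 hX hT.le hl₁.le hS⟩
    fun τ hτ σ hσ => ⟨_, hv.min_mem_lambdaStops h7 hX hS hτ hσ, ae_of_all _ fun _ => le_rfl⟩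
  have hσs0 : ∀ n, Stop0 ℱ T (σs n) := fun n => (hσs n).1.stop0 hS
  have htl0 : Stop0 ℱ T tl :=
    ⟨isStoppingTime_of_tendsto hcf hrcf (fun n => (hσs0 n).1)
      (fun ω => ⟨0, Set.forall_mem_range.2 fun n => (hσs0 n).2.1 ω⟩) hlim,
      fun ω => (hS.2.1 ω).trans (htl_bd ω).1, fun ω => (htl_bd ω).2⟩
  have hvS := hv.le_cond_of_le_lambdaStops hT.le h6 h7 hX hbdd hl₀.le hl₁ hS htl0
    (fun ω => (htl_bd ω).1) htl.1
  have hvtl := hv.domPos hT.le h7 hX hbdd htl0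
  calc l * 𝔈.E0 (v S) ≤ l * 𝔈.E0 (v tl) := by
        gcongr
        rw [← FExp.E0_cond hT.le hS hvtl]
        exact FExp.E0_mono hT.le (hv.domPos hT.le h7 hX hbdd hS) (hvtl.cond hS) hvS
    _ ≤ 𝔈.E0 (X tl) := hv.mul_E0_le_of_tendsto hT.le h6 h7 hX hXce.1 hbdd hl₀ hl₁.le htl0 hσs0
        (fun n => (hσs n).2) hlim

end OptMultStop
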